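/- arXiv:1710.03665 — 9 statements merged into one kernel-verified Lean document; each statement's English description precedes it below -/
import Mathlib

section
/- Let μ be a non-negative Borel measure on ℝⁿ that is finite on compact sets. Let (ψ_ε)_{ε∈(0,1]} be a net of smooth compactly supported functions on ℝⁿ such that supp ψ_ε is contained in the closed unit ball, ∫ ψ_ε = 1 for all ε, and for every ν > 0 there exists ε₀ ∈ (0,1] with ∫ |ψ_ε| ≤ 1 + ν for all ε ≤ ε₀. Set ρ_ε(x) := ε^{−n} ψ_ε(x/ε) and u_ε(x) := ∫_{ℝⁿ} ρ_ε(x − y) dμ(y). Then for every continuous compactly supported function f : ℝⁿ → ℝ one has lim_{ε→0⁺} ∫_{ℝⁿ} min(u_ε(x), 0) f(x) dx = 0. -/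
open MeasureTheory Filter Topology

private lemma max_neg_eq (a : ℝ) : max (-a) 0 = (|a| - a) / 2 := by
  rcases le_total a 0 with h | h
  · rw [abs_of_nonpos h, max_eq_left (by linarith)]; ring
  · rw [abs_of_nonneg h, max_eq_right (by linarith)]; ring

private lemma aux_bound {n : ℕ} (μ : Measure (EuclideanSpace ℝ (Fin n)))
    [IsFiniteMeasureOnCompacts μ]
    (φ : EuclideanSpace ℝ (Fin n) → ℝ) (hφc : Continuous φ) (hφs : HasCompactSupport φ)
    (hφball : ∀ z : EuclideanSpace ℝ (Fin n), 1 < ‖z‖ → φ z = 0)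
    (f : EuclideanSpace ℝ (Fin n) → ℝ) (hf : Continuous f) (hfc : HasCompactSupport f)
    (C : ℝ) (hC : ∀ x, ‖f x‖ ≤ C) :
    |∫ x, min (∫ y, φ (x - y) ∂μ) 0 * f x| ≤
      (μ (Metric.cthickening 1 (tsupport f))).toReal * C * ∫ x, max (-(φ x)) 0 := by
  classical
  have hC0 : 0 ≤ C := le_trans (norm_nonneg _) (hC 0)
  have hφmc : Continuous fun z : EuclideanSpace ℝ (Fin n) => max (-(φ z)) 0 :=
    hφc.neg.max continuous_const
  have hφms : HasCompactSupport fun z : EuclideanSpace ℝ (Fin n) => max (-(φ z)) 0 :=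
    hφs.comp_left (g := fun a : ℝ => max (-a) 0) (by norm_num)
  have hφm_nonneg : ∀ z : EuclideanSpace ℝ (Fin n), 0 ≤ max (-(φ z)) 0 :=
    fun z => le_max_right _ _
  have hK'c : IsCompact (Metric.cthickening 1 (tsupport f)) := hfc.cthickening
  -- integrability of translates
  have hint : ∀ x : EuclideanSpace ℝ (Fin n), Integrable (fun y => φ (x - y)) μ := by
    intro x
    exact (hφc.comp (continuous_const.sub continuous_id)).integrable_of_hasCompactSupport
      (hφs.comp_homeomorph (Homeomorph.subLeft x))
  have hintm : ∀ x : EuclideanSpace ℝ (Fin n),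
      Integrable (fun y => max (-(φ (x - y))) 0) μ := by
    intro x
    exact (hφmc.comp (continuous_const.sub continuous_id)).integrable_of_hasCompactSupport
      (hφms.comp_homeomorph (Homeomorph.subLeft x))
  have hintm' : ∀ y : EuclideanSpace ℝ (Fin n),
      Integrable (fun x => max (-(φ (x - y))) 0) (volume : Measure (EuclideanSpace ℝ (Fin n))) := by
    intro y
    exact (hφmc.comp (continuous_id.sub continuous_const)).integrable_of_hasCompactSupport
      (hφms.comp_homeomorph (Homeomorph.subRight y))
  -- pointwise bound
  have key : ∀ x : EuclideanSpace ℝ (Fin n),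
      |min (∫ y, φ (x - y) ∂μ) 0| ≤ ∫ y, max (-(φ (x - y))) 0 ∂μ := by
    intro x
    have h0 : 0 ≤ ∫ y, max (-(φ (x - y))) 0 ∂μ := integral_nonneg fun y => hφm_nonneg _
    have hneg : -(∫ y, φ (x - y) ∂μ) ≤ ∫ y, max (-(φ (x - y))) 0 ∂μ := by
      rw [← integral_neg]
      exact integral_mono (hint x).neg (hintm x) fun y => le_max_left _ _
    rcases le_total (∫ y, φ (x - y) ∂μ) 0 with h | h
    · rw [min_eq_left h, abs_of_nonpos h]; exact hneg
    · rw [min_eq_right h, abs_zero]; exact h0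
  have hFmeas : Measurable fun p : EuclideanSpace ℝ (Fin n) × EuclideanSpace ℝ (Fin n) =>
      ENNReal.ofReal (max (-(φ (p.1 - p.2))) 0) := by
    apply Measurable.ennreal_ofReal
    exact (hφmc.comp (continuous_fst.sub continuous_snd)).measurable
  have hBne : μ (Metric.cthickening 1 (tsupport f)) *
      (ENNReal.ofReal C * ENNReal.ofReal (∫ x, max (-(φ x)) 0)) ≠ ⊤ := by
    exact ENNReal.mul_ne_top (hK'c.measure_lt_top).ne
      (ENNReal.mul_ne_top ENNReal.ofReal_ne_top ENNReal.ofReal_ne_top)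
  have main : (∫⁻ x, ‖min (∫ y, φ (x - y) ∂μ) 0 * f x‖₊
        ∂(volume : Measure (EuclideanSpace ℝ (Fin n)))) ≤
      μ (Metric.cthickening 1 (tsupport f)) *
        (ENNReal.ofReal C * ENNReal.ofReal (∫ x, max (-(φ x)) 0)) := by
    have step1 : ∀ x : EuclideanSpace ℝ (Fin n),
        (‖min (∫ y, φ (x - y) ∂μ) 0 * f x‖₊ : ENNReal) ≤
        (∫⁻ y, ENNReal.ofReal (max (-(φ (x - y))) 0) ∂μ) * ‖f x‖₊ := by
      intro x
      rw [nnnorm_mul, ENNReal.coe_mul]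
      apply mul_le_mul_left
      rw [← enorm_eq_nnnorm, Real.enorm_eq_ofReal_abs]
      rw [← ofReal_integral_eq_lintegral_ofReal (hintm x)
        (Filter.Eventually.of_forall fun y => hφm_nonneg _)]
      exact ENNReal.ofReal_le_ofReal (key x)
    calc (∫⁻ x, ‖min (∫ y, φ (x - y) ∂μ) 0 * f x‖₊
          ∂(volume : Measure (EuclideanSpace ℝ (Fin n))))
        ≤ ∫⁻ x, (∫⁻ y, ENNReal.ofReal (max (-(φ (x - y))) 0) ∂μ) * ‖f x‖₊
            ∂(volume : Measure (EuclideanSpace ℝ (Fin n))) :=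
          lintegral_mono fun x => step1 x
      _ = ∫⁻ x, ∫⁻ y, ENNReal.ofReal (max (-(φ (x - y))) 0) * ‖f x‖₊ ∂μ
            ∂(volume : Measure (EuclideanSpace ℝ (Fin n))) := by
          apply lintegral_congr; intro x
          rw [lintegral_mul_const]
          exact Measurable.ennreal_ofReal
            (hφmc.comp (continuous_const.sub continuous_id)).measurable
      _ = ∫⁻ y, ∫⁻ x, ENNReal.ofReal (max (-(φ (x - y))) 0) * ‖f x‖₊
            ∂(volume : Measure (EuclideanSpace ℝ (Fin n))) ∂μ := by
          apply lintegral_lintegral_swap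
          exact (hFmeas.mul (((measurable_nnnorm.comp hf.measurable).comp
            measurable_fst).coe_nnreal_ennreal)).aemeasurable
      _ ≤ ∫⁻ y, (Metric.cthickening 1 (tsupport f)).indicator
            (fun _ => ENNReal.ofReal C * ENNReal.ofReal (∫ x, max (-(φ x)) 0)) y ∂μ := by
          apply lintegral_mono
          intro y
          by_cases hy : y ∈ Metric.cthickening 1 (tsupport f)
          · rw [Set.indicator_of_mem hy]
            calc ∫⁻ x, ENNReal.ofReal (max (-(φ (x - y))) 0) * ‖f x‖₊
                  ∂(volume : Measure (EuclideanSpace ℝ (Fin n)))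
                ≤ ∫⁻ x, ENNReal.ofReal (max (-(φ (x - y))) 0) * ENNReal.ofReal C
                    ∂(volume : Measure (EuclideanSpace ℝ (Fin n))) := by
                  apply lintegral_mono; intro x
                  apply mul_le_mul_right
                  rw [← enorm_eq_nnnorm, Real.enorm_eq_ofReal_abs, ← Real.norm_eq_abs]
                  exact ENNReal.ofReal_le_ofReal (hC x)
              _ = (∫⁻ x, ENNReal.ofReal (max (-(φ (x - y))) 0)
                    ∂(volume : Measure (EuclideanSpace ℝ (Fin n)))) * ENNReal.ofReal C := by
                  rw [lintegral_mul_const]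
                  exact Measurable.ennreal_ofReal
                    (hφmc.comp (continuous_id.sub continuous_const)).measurable
              _ = ENNReal.ofReal (∫ x, max (-(φ (x - y))) 0) * ENNReal.ofReal C := by
                  rw [ofReal_integral_eq_lintegral_ofReal (hintm' y)
                    (Filter.Eventually.of_forall fun x => hφm_nonneg _)]
              _ = ENNReal.ofReal C * ENNReal.ofReal (∫ x, max (-(φ x)) 0) := by
                  rw [integral_sub_right_eq_self
                    (fun z : EuclideanSpace ℝ (Fin n) => max (-(φ z)) 0) y, mul_comm]
          · rw [Set.indicator_of_notMem hy]
            have hzero : ∀ x : EuclideanSpace ℝ (Fin n),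
                ENNReal.ofReal (max (-(φ (x - y))) 0) * ‖f x‖₊ = 0 := by
              intro x
              by_cases hx : x ∈ tsupport f
              · have hdist : (1 : ℝ) < ‖x - y‖ := by
                  by_contra h
                  push_neg at h
                  exact hy (Metric.mem_cthickening_of_dist_le y x 1 _ hx
                    (by rw [dist_comm, dist_eq_norm]; exact h))
                have h0 : φ (x - y) = 0 := hφball _ hdist
                simp [h0]
              · have h0 : f x = 0 := image_eq_zero_of_notMem_tsupport hx
                simp [h0]
            calc ∫⁻ x, ENNReal.ofReal (max (-(φ (x - y))) 0) * ‖f x‖₊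
                  ∂(volume : Measure (EuclideanSpace ℝ (Fin n)))
                = ∫⁻ _x, (0:ENNReal) ∂(volume : Measure (EuclideanSpace ℝ (Fin n))) :=
                  lintegral_congr hzero
              _ = 0 := lintegral_zero
              _ ≤ 0 := le_rfl
      _ = μ (Metric.cthickening 1 (tsupport f)) *
            (ENNReal.ofReal C * ENNReal.ofReal (∫ x, max (-(φ x)) 0)) := by
          rw [lintegral_indicator (Metric.isClosed_cthickening.measurableSet),
            setLIntegral_const, mul_comm]
  have h1 : |∫ x, min (∫ y, φ (x - y) ∂μ) 0 * f x| ≤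
      (∫⁻ x, ‖min (∫ y, φ (x - y) ∂μ) 0 * f x‖₊
        ∂(volume : Measure (EuclideanSpace ℝ (Fin n)))).toReal := by
    rw [← Real.norm_eq_abs]
    refine le_trans (norm_integral_le_lintegral_norm _) (le_of_eq ?_)
    congr 1
    apply lintegral_congr
    intro x
    rw [ofReal_norm, enorm_eq_nnnorm]
  have h2 := ENNReal.toReal_mono hBne main
  have hBtoReal : (μ (Metric.cthickening 1 (tsupport f)) *
      (ENNReal.ofReal C * ENNReal.ofReal (∫ x, max (-(φ x)) 0))).toReal =
      (μ (Metric.cthickening 1 (tsupport f))).toReal * C * ∫ x, max (-(φ x)) 0 := by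
    rw [ENNReal.toReal_mul, ENNReal.toReal_mul, ENNReal.toReal_ofReal hC0,
      ENNReal.toReal_ofReal (integral_nonneg fun x => hφm_nonneg x), mul_assoc]
  rw [hBtoReal] at h2
  exact le_trans h1 h2

/-- The negative part of the mollification of a non-negative Borel measure (finite on
compact sets) on ℝⁿ by an admissible delta net is associated to the zero distribution:
for every continuous compactly supported `f`,
`lim_{ε→0⁺} ∫ min(u_ε, 0) f = 0`, where `u_ε = ρ_ε ∗ μ` and `ρ_ε(x) = ε⁻ⁿ ψ_ε(x/ε)`. -/
theorem neg_part_of_mollified_nonneg_measure_vanishes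
    {n : ℕ} (μ : Measure (EuclideanSpace ℝ (Fin n)))
    (hμ : ∀ K : Set (EuclideanSpace ℝ (Fin n)), IsCompact K → μ K < ⊤)
    (ψ : ℝ → EuclideanSpace ℝ (Fin n) → ℝ)
    (hψ_smooth : ∀ ε ∈ Set.Ioc (0:ℝ) 1, ContDiff ℝ (⊤ : ℕ∞) (ψ ε) ∧ HasCompactSupport (ψ ε))
    (hψ_supp : ∀ ε ∈ Set.Ioc (0:ℝ) 1, tsupport (ψ ε) ⊆ Metric.closedBall 0 1)
    (hψ_int : ∀ ε ∈ Set.Ioc (0:ℝ) 1, ∫ x, ψ ε x = 1)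
    (hψ_L1 : ∀ ν : ℝ, 0 < ν → ∃ ε₀ ∈ Set.Ioc (0:ℝ) 1, ∀ ε : ℝ, 0 < ε → ε ≤ ε₀ →
      ∫ x, |ψ ε x| ≤ 1 + ν)
    (f : EuclideanSpace ℝ (Fin n) → ℝ) (hf : Continuous f) (hfc : HasCompactSupport f) :
    Tendsto
      (fun ε : ℝ =>
        ∫ x, min (∫ y, (ε ^ n)⁻¹ * ψ ε (ε⁻¹ • (x - y)) ∂μ) 0 * f x)
      (𝓝[>] (0:ℝ)) (𝓝 0) := by
  classical
  haveI : IsFiniteMeasureOnCompacts μ := ⟨fun {K} hK => hμ K hK⟩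
  obtain ⟨C, hC⟩ := hfc.exists_bound_of_continuous hf
  have hC0 : 0 ≤ C := le_trans (norm_nonneg _) (hC 0)
  have hM0 : 0 ≤ (μ (Metric.cthickening 1 (tsupport f))).toReal * C :=
    mul_nonneg ENNReal.toReal_nonneg hC0
  rw [NormedAddCommGroup.tendsto_nhds_zero]
  intro δ hδ
  have hν : 0 < δ / ((μ (Metric.cthickening 1 (tsupport f))).toReal * C + 1) :=
    div_pos hδ (by linarith)
  obtain ⟨ε₀, hε₀, hL1⟩ := hψ_L1 _ hν
  have hmem : Set.Ioc (0:ℝ) (min ε₀ 1) ∈ 𝓝[>] (0:ℝ) :=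
    Ioc_mem_nhdsGT_of_mem ⟨le_refl 0, lt_min hε₀.1 one_pos⟩
  filter_upwards [hmem] with ε hε
  obtain ⟨hεpos, hεle⟩ := hε
  have hε1 : ε ≤ 1 := le_trans hεle (min_le_right _ _)
  have hεε₀ : ε ≤ ε₀ := le_trans hεle (min_le_left _ _)
  have hεI : ε ∈ Set.Ioc (0:ℝ) 1 := ⟨hεpos, hε1⟩
  have hεn_pos : (0:ℝ) < ε ^ n := pow_pos hεpos n
  have hφc : Continuous fun z : EuclideanSpace ℝ (Fin n) => (ε ^ n)⁻¹ * ψ ε (ε⁻¹ • z) :=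
    continuous_const.mul ((hψ_smooth ε hεI).1.continuous.comp (continuous_const_smul ε⁻¹))
  have hφball : ∀ z : EuclideanSpace ℝ (Fin n), 1 < ‖z‖ →
      (ε ^ n)⁻¹ * ψ ε (ε⁻¹ • z) = 0 := by
    intro z hz
    have hnot : ε⁻¹ • z ∉ tsupport (ψ ε) := by
      intro hmem'
      have hle := hψ_supp ε hεI hmem'
      rw [Metric.mem_closedBall, dist_zero_right, norm_smul, norm_inv,
        Real.norm_eq_abs, abs_of_pos hεpos] at hle
      have hinv : (1:ℝ) ≤ ε⁻¹ := one_le_inv₀ hεpos |>.mpr hε1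
      have h1 : (1:ℝ) < ε⁻¹ * ‖z‖ := by nlinarith [norm_nonneg z]
      exact absurd hle (not_le.mpr h1)
    have h0 : ψ ε (ε⁻¹ • z) = 0 := image_eq_zero_of_notMem_tsupport hnot
    simp [h0]
  have hφs : HasCompactSupport fun z : EuclideanSpace ℝ (Fin n) =>
      (ε ^ n)⁻¹ * ψ ε (ε⁻¹ • z) :=
    HasCompactSupport.intro (isCompact_closedBall (0 : EuclideanSpace ℝ (Fin n)) 1)
      (fun z hz => hφball z (by rwa [Metric.mem_closedBall, dist_zero_right, not_le] at hz))
  have hbound := aux_bound μ _ hφc hφs hφball f hf hfc C hC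
  have hψint : Integrable (ψ ε) (volume : Measure (EuclideanSpace ℝ (Fin n))) :=
    (hψ_smooth ε hεI).1.continuous.integrable_of_hasCompactSupport (hψ_smooth ε hεI).2
  have hψabs : Integrable (fun x => |ψ ε x|)
      (volume : Measure (EuclideanSpace ℝ (Fin n))) := hψint.abs
  have hJeq : (∫ x : EuclideanSpace ℝ (Fin n), max (-((ε ^ n)⁻¹ * ψ ε (ε⁻¹ • x))) 0)
      = ∫ x : EuclideanSpace ℝ (Fin n), max (-(ψ ε x)) 0 := by
    have hpt : ∀ x : EuclideanSpace ℝ (Fin n),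
        max (-((ε ^ n)⁻¹ * ψ ε (ε⁻¹ • x))) 0 = (ε ^ n)⁻¹ * max (-(ψ ε (ε⁻¹ • x))) 0 := by
      intro x
      rw [mul_max_of_nonneg _ _ (inv_nonneg.mpr hεn_pos.le)]
      simp [mul_neg]
    simp_rw [hpt]
    rw [integral_const_mul]
    have hscale := Measure.integral_comp_inv_smul_of_nonneg
      (volume : Measure (EuclideanSpace ℝ (Fin n)))
      (fun x : EuclideanSpace ℝ (Fin n) => max (-(ψ ε x)) 0) hεpos.le
    rw [hscale, finrank_euclideanSpace_fin, smul_eq_mul, ← mul_assoc,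
      inv_mul_cancel₀ hεn_pos.ne', one_mul]
  have hJnonneg : 0 ≤ ∫ x : EuclideanSpace ℝ (Fin n), max (-(ψ ε x)) 0 :=
    integral_nonneg fun x => le_max_right _ _
  have hJle : (∫ x : EuclideanSpace ℝ (Fin n), max (-(ψ ε x)) 0) ≤
      δ / ((μ (Metric.cthickening 1 (tsupport f))).toReal * C + 1) / 2 := by
    have hpt : ∀ x : EuclideanSpace ℝ (Fin n),
        max (-(ψ ε x)) 0 = (|ψ ε x| - ψ ε x) / 2 := fun x => max_neg_eq _
    simp_rw [hpt]
    rw [integral_div, integral_sub hψabs hψint, hψ_int ε hεI]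
    have := hL1 ε hεpos hεε₀
    linarith
  have hlast : ((μ (Metric.cthickening 1 (tsupport f))).toReal * C) *
      (δ / ((μ (Metric.cthickening 1 (tsupport f))).toReal * C + 1) / 2) < δ := by
    set M := (μ (Metric.cthickening 1 (tsupport f))).toReal * C with hM
    have hM1 : δ / (M + 1) * (M + 1) = δ := div_mul_cancel₀ δ (by linarith : M + 1 ≠ 0)
    nlinarith [hν, hM0]
  rw [hJeq] at hbound
  rw [Real.norm_eq_abs]
  calc |∫ x, min (∫ y, (ε ^ n)⁻¹ * ψ ε (ε⁻¹ • (x - y)) ∂μ) 0 * f x|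
      ≤ ((μ (Metric.cthickening 1 (tsupport f))).toReal * C) *
          ∫ x : EuclideanSpace ℝ (Fin n), max (-(ψ ε x)) 0 := hbound
    _ ≤ ((μ (Metric.cthickening 1 (tsupport f))).toReal * C) *
          (δ / ((μ (Metric.cthickening 1 (tsupport f))).toReal * C + 1) / 2) :=
        mul_le_mul_of_nonneg_left hJle hM0
    _ < δ := hlast
end

section
/- Let μ be a non-negative Borel measure on ℝⁿ that is finite on compact sets. Let (ψ_ε)_{ε∈(0,1]} be a net of smooth compactly supported functions on ℝⁿ such that supp ψ_ε is contained in the closed unit ball, ∫ ψ_ε = 1 for all ε, and for every ν > 0 there exists ε₀ ∈ (0,1] with ∫ |ψ_ε| ≤ 1 + ν for all ε ≤ ε₀. Set ρ_ε(x) := ε^{−n} ψ_ε(x/ε) and u_ε(x) := ∫_{ℝⁿ} ρ_ε(x − y) dμ(y). Then for every continuous compactly supported function f : ℝⁿ → ℝ one has lim_{ε→0⁺} ∫_{ℝⁿ} max(u_ε(x), 0) f(x) dx = ∫_{ℝⁿ} f dμ. -/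
open MeasureTheory Filter Topology

lemma abs_integral_le {α : Type*} [MeasurableSpace α] {μ : Measure α} (g : α → ℝ) :
    |∫ x, g x ∂μ| ≤ ∫ x, |g x| ∂μ := by
  simpa [Real.norm_eq_abs] using norm_integral_le_integral_norm g

lemma scale_integral {n : ℕ} {ε : ℝ} (hε : 0 < ε) (g : EuclideanSpace ℝ (Fin n) → ℝ) :
    ∫ z, (ε ^ n)⁻¹ * g (ε⁻¹ • z) = ∫ w, g w := by
  rw [integral_const_mul, Measure.integral_comp_inv_smul_of_nonneg volume g hε.le,
    finrank_euclideanSpace_fin, smul_eq_mul, inv_mul_cancel_left₀ (pow_ne_zero _ hε.ne')]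

set_option maxHeartbeats 2000000 in
/-- The positive part of the mollification of a non-negative Borel measure (finite on
compact sets) on ℝⁿ by an admissible delta net converges weakly to the measure itself:
for every continuous compactly supported `f`,
`lim_{ε→0⁺} ∫ max(u_ε, 0) f = ∫ f dμ`, where `u_ε = ρ_ε ∗ μ` and `ρ_ε(x) = ε⁻ⁿ ψ_ε(x/ε)`. -/
theorem pos_part_of_mollified_nonneg_measure_tendsto
    {n : ℕ} (μ : Measure (EuclideanSpace ℝ (Fin n)))
    (hμ : ∀ K : Set (EuclideanSpace ℝ (Fin n)), IsCompact K → μ K < ⊤)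
    (ψ : ℝ → EuclideanSpace ℝ (Fin n) → ℝ)
    (hψ_smooth : ∀ ε ∈ Set.Ioc (0:ℝ) 1, ContDiff ℝ (⊤ : ℕ∞) (ψ ε) ∧ HasCompactSupport (ψ ε))
    (hψ_supp : ∀ ε ∈ Set.Ioc (0:ℝ) 1, tsupport (ψ ε) ⊆ Metric.closedBall 0 1)
    (hψ_int : ∀ ε ∈ Set.Ioc (0:ℝ) 1, ∫ x, ψ ε x = 1)
    (hψ_L1 : ∀ ν : ℝ, 0 < ν → ∃ ε₀ ∈ Set.Ioc (0:ℝ) 1, ∀ ε : ℝ, 0 < ε → ε ≤ ε₀ →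
      ∫ x, |ψ ε x| ≤ 1 + ν)
    (f : EuclideanSpace ℝ (Fin n) → ℝ) (hf : Continuous f) (hfc : HasCompactSupport f) :
    Tendsto
      (fun ε : ℝ =>
        ∫ x, max (∫ y, (ε ^ n)⁻¹ * ψ ε (ε⁻¹ • (x - y)) ∂μ) 0 * f x)
      (𝓝[>] (0:ℝ)) (𝓝 (∫ x, f x ∂μ)) := by
  classical
  haveI : IsFiniteMeasureOnCompacts μ := ⟨fun _ hK => hμ _ hK⟩
  set T : Set (EuclideanSpace ℝ (Fin n)) := tsupport f with hTdef
  have hTc : IsCompact T := hfc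
  have hTmeas : MeasurableSet T := (isClosed_tsupport f).measurableSet
  set K : Set (EuclideanSpace ℝ (Fin n)) := Metric.cthickening 1 T with hKdef
  have hKc : IsCompact K := hfc.cthickening
  have hKmeas : MeasurableSet K := Metric.isClosed_cthickening.measurableSet
  have hμKlt : μ K < ⊤ := hμ _ hKc
  obtain ⟨C, hC⟩ := hfc.exists_bound_of_continuous hf
  have hC0 : 0 ≤ C := le_trans (norm_nonneg _) (hC 0)
  have hfu := hfc.uniformContinuous_of_continuous hf
  rw [Metric.uniformContinuous_iff] at hfu
  set μK : ℝ := (μ K).toReal with hμKdef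
  have hμK0 : 0 ≤ μK := ENNReal.toReal_nonneg
  rw [Metric.tendsto_nhdsWithin_nhds]
  intro δ hδ
  set ν : ℝ := δ / (4 * (C + 1) * (μK + 1)) with hνdef
  have hνpos : 0 < ν := by positivity
  obtain ⟨ε₀, hε₀Ioc, hε₀⟩ := hψ_L1 ν hνpos
  set δ' : ℝ := δ / (4 * (1 + ν) * (μK + 1)) with hδ'def
  have hδ'pos : 0 < δ' := by positivity
  obtain ⟨ε₁, hε₁pos, hε₁⟩ := hfu δ' hδ'pos
  refine ⟨min ε₀ ε₁, lt_min hε₀Ioc.1 hε₁pos, ?_⟩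
  intro ε hεmem hεdist
  have hε : 0 < ε := hεmem
  rw [Real.dist_eq, sub_zero, abs_of_pos hε] at hεdist
  have hεε₀ : ε ≤ ε₀ := le_of_lt (lt_of_lt_of_le hεdist (min_le_left _ _))
  have hεε₁ : ε < ε₁ := lt_of_lt_of_le hεdist (min_le_right _ _)
  have hεIoc : ε ∈ Set.Ioc (0:ℝ) 1 := ⟨hε, hεε₀.trans hε₀Ioc.2⟩
  have hε1 : ε ≤ 1 := hεIoc.2
  have hεn : (0:ℝ) < (ε ^ n)⁻¹ := by positivity
  -- properties of the mollifier at scale ε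
  obtain ⟨hψsm, hψcs⟩ := hψ_smooth ε hεIoc
  have hψcont : Continuous (ψ ε) := hψsm.continuous
  have hψint : Integrable (ψ ε) := hψcont.integrable_of_hasCompactSupport hψcs
  obtain ⟨Cψ, hCψ⟩ := hψcs.exists_bound_of_continuous hψcont
  have hCψ0 : 0 ≤ Cψ := le_trans (norm_nonneg _) (hCψ 0)
  have hψL1 : ∫ x, |ψ ε x| ≤ 1 + ν := hε₀ ε hε hεε₀
  have hψ1 : ∫ x, ψ ε x = 1 := hψ_int ε hεIoc
  -- rescaled kernel ρ and its negative part ρm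
  set ρ : EuclideanSpace ℝ (Fin n) → ℝ := fun z => (ε ^ n)⁻¹ * ψ ε (ε⁻¹ • z) with hρdef
  set ρm : EuclideanSpace ℝ (Fin n) → ℝ := fun z => (ε ^ n)⁻¹ * max (-ψ ε (ε⁻¹ • z)) 0
    with hρmdef
  have hρcont : Continuous ρ :=
    continuous_const.mul (hψcont.comp (continuous_id.const_smul ε⁻¹))
  have hρmcont : Continuous ρm :=
    continuous_const.mul
      (((hψcont.comp (continuous_id.const_smul ε⁻¹)).neg).max continuous_const)
  have hψz : ∀ z : EuclideanSpace ℝ (Fin n), ε < ‖z‖ → ψ ε (ε⁻¹ • z) = 0 := by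
    intro z hz
    by_contra h
    have hmem : ε⁻¹ • z ∈ tsupport (ψ ε) := subset_tsupport _ h
    have := hψ_supp ε hεIoc hmem
    rw [Metric.mem_closedBall, dist_zero_right, norm_smul, norm_inv, Real.norm_eq_abs,
      abs_of_pos hε] at this
    have : ‖z‖ ≤ ε := by
      have h' := mul_le_mul_of_nonneg_left this hε.le
      rwa [mul_inv_cancel_left₀ hε.ne', mul_one] at h'
    linarith
  have hρsupp : ∀ z : EuclideanSpace ℝ (Fin n), ε < ‖z‖ → ρ z = 0 := fun z hz => by
    simp [hρdef, hψz z hz]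
  have hρmsupp : ∀ z : EuclideanSpace ℝ (Fin n), ε < ‖z‖ → ρm z = 0 := fun z hz => by
    simp [hρmdef, hψz z hz]
  have hρmnonneg : ∀ z, 0 ≤ ρm z := fun z =>
    mul_nonneg hεn.le (le_max_right _ _)
  have hρb : ∀ z, |ρ z| ≤ (ε ^ n)⁻¹ * Cψ := by
    intro z
    simp only [hρdef]
    rw [abs_mul, abs_of_pos hεn]
    exact mul_le_mul_of_nonneg_left (by simpa using hCψ (ε⁻¹ • z)) hεn.le
  have hρmb : ∀ z, ρm z ≤ (ε ^ n)⁻¹ * Cψ := by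
    intro z
    refine mul_le_mul_of_nonneg_left ?_ hεn.le
    rw [max_le_iff]
    constructor
    · have := hCψ (ε⁻¹ • z); rw [Real.norm_eq_abs] at this
      linarith [neg_abs_le (ψ ε (ε⁻¹ • z))]
    · exact hCψ0
  have hnegρ : ∀ z, -ρ z ≤ ρm z := by
    intro z
    simp only [hρdef, hρmdef, ← mul_neg]
    exact mul_le_mul_of_nonneg_left (le_max_left _ _) hεn.le
  -- if x ∈ T and the kernel doesn't vanish at x - y then y ∈ K
  have hyK : ∀ x y : EuclideanSpace ℝ (Fin n), x ∈ T → ‖x - y‖ ≤ ε → y ∈ K := by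
    intro x y hx hxy
    refine Metric.mem_cthickening_of_dist_le y x 1 T hx ?_
    rw [dist_eq_norm, ← norm_neg, neg_sub]
    exact hxy.trans hε1
  -- integrability of auxiliary product functions
  have hTKfin : (volume.prod μ) (T ×ˢ K) < ⊤ := by
    rw [Measure.prod_prod]
    exact ENNReal.mul_lt_top hTc.measure_lt_top hμKlt
  have hTKmeas : MeasurableSet (T ×ˢ K) := hTmeas.prod hKmeas
  have hindint : ∀ B : ℝ, Integrable ((T ×ˢ K).indicator fun _ => B) (volume.prod μ) := by
    intro B
    rw [integrable_indicator_iff hTKmeas]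
    exact integrableOn_const hTKfin.ne
  -- the two product integrands
  set h₁ : EuclideanSpace ℝ (Fin n) × EuclideanSpace ℝ (Fin n) → ℝ :=
    fun p => ρ (p.1 - p.2) * f p.1 with hh₁def
  set h₂ : EuclideanSpace ℝ (Fin n) × EuclideanSpace ℝ (Fin n) → ℝ :=
    fun p => T.indicator (fun _ => (1:ℝ)) p.1 * ρm (p.1 - p.2) with hh₂def
  have hh₁meas : AEStronglyMeasurable h₁ (volume.prod μ) :=
    ((hρcont.comp (continuous_fst.sub continuous_snd)).mul
      (hf.comp continuous_fst)).aestronglyMeasurable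
  have hh₂meas : AEStronglyMeasurable h₂ (volume.prod μ) := by
    apply Measurable.aestronglyMeasurable
    exact ((measurable_one.indicator hTmeas).comp measurable_fst).mul
      ((hρmcont.comp (continuous_fst.sub continuous_snd)).measurable)
  have hh₁int : Integrable h₁ (volume.prod μ) := by
    refine (hindint ((ε ^ n)⁻¹ * Cψ * C)).mono' hh₁meas (Filter.Eventually.of_forall ?_)
    rintro ⟨x, y⟩
    by_cases hx : x ∈ T
    · by_cases hy : y ∈ K
      · rw [Set.indicator_of_mem (Set.mk_mem_prod hx hy)]
        simp only [Real.norm_eq_abs, hh₁def, abs_mul]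
        exact mul_le_mul (hρb _) (by simpa using hC x) (abs_nonneg _)
          (by positivity)
      · have hρ0 : ρ (x - y) = 0 := by
          apply hρsupp
          by_contra h
          push_neg at h
          exact hy (hyK x y hx h)
        simp only [hh₁def, hρ0, zero_mul, norm_zero]
        exact Set.indicator_nonneg (fun _ _ => by positivity) _
    · simp only [hh₁def, image_eq_zero_of_notMem_tsupport hx, mul_zero, norm_zero]
      exact Set.indicator_nonneg (fun _ _ => by positivity) _
  have hh₂int : Integrable h₂ (volume.prod μ) := by
    refine (hindint ((ε ^ n)⁻¹ * Cψ)).mono' hh₂meas (Filter.Eventually.of_forall ?_)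
    rintro ⟨x, y⟩
    by_cases hx : x ∈ T
    · by_cases hy : y ∈ K
      · rw [Set.indicator_of_mem (Set.mk_mem_prod hx hy)]
        simp only [Real.norm_eq_abs, hh₂def, Set.indicator_of_mem hx, one_mul,
          abs_of_nonneg (hρmnonneg (x - y))]
        exact hρmb _
      · have hρ0 : ρm (x - y) = 0 := by
          apply hρmsupp
          by_contra h
          push_neg at h
          exact hy (hyK x y hx h)
        simp only [hh₂def, hρ0, mul_zero, norm_zero]
        exact Set.indicator_nonneg (fun _ _ => by positivity) _
    · simp only [hh₂def, Set.indicator_of_notMem hx, zero_mul, norm_zero]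
      exact Set.indicator_nonneg (fun _ _ => by positivity) _
  -- the mollified function u and its negative part control
  set u : EuclideanSpace ℝ (Fin n) → ℝ := fun x => ∫ y, ρ (x - y) ∂μ with hudef
  set q : EuclideanSpace ℝ (Fin n) → ℝ := fun x => ∫ y, ρm (x - y) ∂μ with hqdef
  have hρ_int_μ : ∀ x, Integrable (fun y => ρ (x - y)) μ := by
    intro x
    apply (hρcont.comp (continuous_const.sub continuous_id)).integrable_of_hasCompactSupport
    apply HasCompactSupport.intro (isCompact_closedBall x ε)
    intro y hy
    apply hρsupp
    rw [Metric.mem_closedBall, dist_comm, dist_eq_norm] at hy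
    push_neg at hy
    exact hy
  have hρm_int_μ : ∀ x, Integrable (fun y => ρm (x - y)) μ := by
    intro x
    apply (hρmcont.comp (continuous_const.sub continuous_id)).integrable_of_hasCompactSupport
    apply HasCompactSupport.intro (isCompact_closedBall x ε)
    intro y hy
    apply hρmsupp
    rw [Metric.mem_closedBall, dist_comm, dist_eq_norm] at hy
    push_neg at hy
    exact hy
  have hq0 : ∀ x, 0 ≤ q x := fun x =>
    integral_nonneg fun y => hρmnonneg _
  have hneg_u : ∀ x, -u x ≤ q x := by
    intro x
    simp only [hudef, hqdef, ← integral_neg]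
    exact integral_mono (hρ_int_μ x).neg (hρm_int_μ x) fun y => hnegρ _
  have humeas : AEStronglyMeasurable u volume :=
    (hρcont.comp (continuous_fst.sub continuous_snd)).aestronglyMeasurable.integral_prod_right'
  -- integrability of u * f over volume
  have hufn : (fun x => u x * f x) = fun x => ∫ y, h₁ (x, y) ∂μ := by
    funext x
    simp only [hudef, hh₁def]
    rw [← integral_mul_const]
  have huf_int : Integrable (fun x => u x * f x) volume := by
    rw [hufn]; exact hh₁int.integral_prod_left
  -- the positive-part correction p
  set p : EuclideanSpace ℝ (Fin n) → ℝ := fun x => max (u x) 0 - u x with hpdef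
  have hp0 : ∀ x, 0 ≤ p x := fun x => by
    simp only [hpdef]; rcases le_total (u x) 0 with h | h
    · rw [max_eq_right h]; linarith
    · rw [max_eq_left h]; linarith
  have hpq : ∀ x, p x ≤ q x := by
    intro x
    simp only [hpdef]
    rcases le_total (u x) 0 with h | h
    · rw [max_eq_right h, zero_sub]; exact hneg_u x
    · rw [max_eq_left h]; simpa using hq0 x
  have hpu : ∀ x, |p x| ≤ |u x| := by
    intro x
    rw [abs_of_nonneg (hp0 x)]
    simp only [hpdef]
    rcases le_total (u x) 0 with h | h
    · rw [max_eq_right h, zero_sub, abs_of_nonpos h]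
    · rw [max_eq_left h]; simp [abs_nonneg]
  have hpf_int : Integrable (fun x => p x * f x) volume := by
    refine huf_int.abs.mono' ?_ (Filter.Eventually.of_forall fun x => ?_)
    · apply AEStronglyMeasurable.mul _ hf.aestronglyMeasurable
      exact ((humeas.aemeasurable.max aemeasurable_const).sub
        humeas.aemeasurable).aestronglyMeasurable
    · rw [Real.norm_eq_abs, abs_mul, abs_mul]
      exact mul_le_mul_of_nonneg_right (hpu x) (abs_nonneg _)
  -- Fubini for h₁ : ∫ u f = ∫ G dμ where G y = ∫ₓ ρ(x-y) f x
  set G : EuclideanSpace ℝ (Fin n) → ℝ := fun y => ∫ x, ρ (x - y) * f x with hGdef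
  have hswap₁ : ∫ x, u x * f x = ∫ y, G y ∂μ := by
    rw [hufn]
    exact integral_integral_swap hh₁int
  have hGint : Integrable G μ := by
    have := hh₁int.integral_prod_right
    exact this
  -- G y equals the convolution written through ψ
  have hGeq : ∀ y, G y = ∫ w, ψ ε w * f (ε • w + y) := by
    intro y
    have htr := integral_add_right_eq_self (μ := volume)
      (fun x => ρ x * f (x + y)) (-y)
    simp only [← sub_eq_add_neg, sub_add_cancel] at htr
    have hsc := scale_integral (n := n) hε (fun w => ψ ε w * f (ε • w + y))
    simp only [smul_inv_smul₀ hε.ne'] at hsc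
    simp only [hGdef]
    rw [htr, ← hsc]
    congr 1
    funext x
    simp only [hρdef]
    ring
  -- pointwise bound for |G - f| with respect to μ
  have hGf : ∀ y, |G y - f y| ≤ K.indicator (fun _ => (1 + ν) * δ') y := by
    intro y
    by_cases hy : y ∈ K
    · rw [Set.indicator_of_mem hy, hGeq y]
      have hint1 : Integrable (fun w => ψ ε w * f (ε • w + y)) := by
        apply Continuous.integrable_of_hasCompactSupport
        · exact hψcont.mul (hf.comp ((continuous_id.const_smul ε).add continuous_const))
        · exact hψcs.mul_right
      have hfy : f y = ∫ w, ψ ε w * f y := by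
        rw [integral_mul_const, hψ1, one_mul]
      rw [hfy, ← integral_sub hint1 (hψint.mul_const _)]
      simp only [← mul_sub]
      calc |∫ w, ψ ε w * (f (ε • w + y) - f y)|
          ≤ ∫ w, |ψ ε w * (f (ε • w + y) - f y)| := abs_integral_le _
        _ ≤ ∫ w, |ψ ε w| * δ' := by
            refine integral_mono_of_nonneg (Filter.Eventually.of_forall fun w => abs_nonneg _)
              (hψint.abs.mul_const _) (Filter.Eventually.of_forall fun w => ?_)
            show |ψ ε w * (f (ε • w + y) - f y)| ≤ |ψ ε w| * δ'
            rw [abs_mul]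
            by_cases hw : ψ ε w = 0
            · simp [hw, mul_nonneg, abs_nonneg, hδ'pos.le]
            · apply mul_le_mul_of_nonneg_left _ (abs_nonneg _)
              have hw1 : ‖w‖ ≤ 1 := by
                have := hψ_supp ε hεIoc (subset_tsupport _ hw)
                rwa [Metric.mem_closedBall, dist_zero_right] at this
              have hd : dist (ε • w + y) y < ε₁ := by
                rw [dist_eq_norm, add_sub_cancel_right, norm_smul, Real.norm_eq_abs,
                  abs_of_pos hε]
                calc ε * ‖w‖ ≤ ε * 1 := by
                      exact mul_le_mul_of_nonneg_left hw1 hε.le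
                  _ = ε := mul_one ε
                  _ < ε₁ := hεε₁
              have := hε₁ hd
              rw [Real.dist_eq] at this
              exact this.le
        _ = (∫ w, |ψ ε w|) * δ' := integral_mul_const _ _
        _ ≤ (1 + ν) * δ' := mul_le_mul_of_nonneg_right hψL1 hδ'pos.le
    · rw [Set.indicator_of_notMem hy]
      have hf0 : f y = 0 := by
        apply image_eq_zero_of_notMem_tsupport
        intro hyT
        exact hy (Metric.self_subset_cthickening _ hyT)
      have hG0 : G y = 0 := by
        rw [hGeq y]
        have : ∀ w, ψ ε w * f (ε • w + y) = 0 := by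
          intro w
          by_cases hw : ψ ε w = 0
          · simp [hw]
          · have hw1 : ‖w‖ ≤ 1 := by
              have := hψ_supp ε hεIoc (subset_tsupport _ hw)
              rwa [Metric.mem_closedBall, dist_zero_right] at this
            have : f (ε • w + y) = 0 := by
              apply image_eq_zero_of_notMem_tsupport
              intro hmem
              apply hy
              refine Metric.mem_cthickening_of_dist_le y (ε • w + y) 1 T hmem ?_
              rw [dist_comm, dist_eq_norm, add_sub_cancel_right, norm_smul,
                Real.norm_eq_abs, abs_of_pos hε]
              calc ε * ‖w‖ ≤ ε * 1 := mul_le_mul_of_nonneg_left hw1 hε.le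
                _ = ε := mul_one ε
                _ ≤ 1 := hε1
            simp [this]
        simp only [this, integral_zero]
      rw [hG0, hf0]
      simp
  -- μ-integral bound : |∫ G dμ - ∫ f dμ| ≤ (1+ν) δ' μK
  have hfint_μ : Integrable f μ := hf.integrable_of_hasCompactSupport hfc
  have hbound1 : |(∫ y, G y ∂μ) - ∫ y, f y ∂μ| ≤ (1 + ν) * δ' * μK := by
    rw [← integral_sub hGint hfint_μ]
    calc |∫ y, (G y - f y) ∂μ| ≤ ∫ y, |G y - f y| ∂μ := abs_integral_le _
      _ ≤ ∫ y, K.indicator (fun _ => (1 + ν) * δ') y ∂μ := by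
          apply integral_mono (hGint.sub hfint_μ).abs _ hGf
          rw [integrable_indicator_iff hKmeas]
          exact integrableOn_const hμKlt.ne
      _ = μK * ((1 + ν) * δ') := by
          rw [integral_indicator_const _ hKmeas, smul_eq_mul, measureReal_def]
      _ = (1 + ν) * δ' * μK := by ring
  -- second term: ∫ p f
  have hqind : ∀ y, (∫ x, h₂ (x, y)) ≤ K.indicator (fun _ => ν / 2) y := by
    intro y
    by_cases hy : y ∈ K
    · rw [Set.indicator_of_mem hy]
      have hρm_int_x : Integrable (fun x => ρm (x - y)) volume := by
        apply (hρmcont.comp (continuous_id.sub continuous_const)).integrable_of_hasCompactSupport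
        apply HasCompactSupport.intro (isCompact_closedBall y ε)
        intro x hx
        apply hρmsupp
        rw [Metric.mem_closedBall, dist_eq_norm] at hx
        push_neg at hx
        exact hx
      have h2int_x : Integrable (fun x => h₂ (x, y)) volume := by
        refine hρm_int_x.mono' ?_ (Filter.Eventually.of_forall fun x => ?_)
        · apply Measurable.aestronglyMeasurable
          exact (measurable_one.indicator hTmeas).mul
            ((hρmcont.comp (continuous_id.sub continuous_const)).measurable)
        · simp only [hh₂def, Real.norm_eq_abs]
          by_cases hx : x ∈ T
          · rw [Set.indicator_of_mem hx, one_mul, abs_of_nonneg (hρmnonneg _)]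
          · rw [Set.indicator_of_notMem hx, zero_mul, abs_zero]
            exact hρmnonneg _
      calc (∫ x, h₂ (x, y)) ≤ ∫ x, ρm (x - y) := by
            apply integral_mono h2int_x hρm_int_x
            intro x
            simp only [hh₂def]
            by_cases hx : x ∈ T
            · rw [Set.indicator_of_mem hx, one_mul]
            · rw [Set.indicator_of_notMem hx, zero_mul]
              exact hρmnonneg _
        _ = ∫ z, ρm z := integral_sub_right_eq_self ρm y
        _ = ∫ w, max (-ψ ε w) 0 := by
            simp only [hρmdef]
            exact scale_integral hε (fun w => max (-ψ ε w) 0)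
        _ = ∫ w, (|ψ ε w| - ψ ε w) / 2 := by
            congr 1
            funext w
            rcases le_total 0 (ψ ε w) with h | h
            · rw [max_eq_right (by linarith), abs_of_nonneg h]; ring
            · rw [max_eq_left (by linarith), abs_of_nonpos h]; ring
        _ = ((∫ w, |ψ ε w|) - ∫ w, ψ ε w) / 2 := by
            rw [integral_div, integral_sub hψint.abs hψint]
        _ ≤ ν / 2 := by
            rw [hψ1]
            linarith
    · rw [Set.indicator_of_notMem hy]
      have : ∀ x, h₂ (x, y) = 0 := by
        intro x
        simp only [hh₂def]
        by_cases hx : x ∈ T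
        · have : ρm (x - y) = 0 := by
            apply hρmsupp
            by_contra h
            push_neg at h
            exact hy (hyK x y hx h)
          rw [this, mul_zero]
        · rw [Set.indicator_of_notMem hx, zero_mul]
      have h0 : (fun x => h₂ (x, y)) = fun _ => 0 := funext this
      rw [h0, integral_zero]
  have hqint : Integrable (fun y => ∫ x, h₂ (x, y)) μ := hh₂int.integral_prod_right
  have hIq : Integrable (fun x => T.indicator (fun _ => (1:ℝ)) x * q x) volume := by
    have := hh₂int.integral_prod_left
    have heq : (fun x => ∫ y, h₂ (x, y) ∂μ)
        = fun x => T.indicator (fun _ => (1:ℝ)) x * q x := by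
      funext x
      simp only [hh₂def, hqdef, hρmdef, integral_const_mul]
    rwa [heq] at this
  have hbound2 : |∫ x, p x * f x| ≤ C * (ν / 2 * μK) := by
    calc |∫ x, p x * f x| ≤ ∫ x, |p x * f x| := abs_integral_le _
      _ ≤ ∫ x, C * (T.indicator (fun _ => (1:ℝ)) x * q x) := by
          apply integral_mono hpf_int.abs (hIq.const_mul C)
          intro x
          show |p x * f x| ≤ C * (T.indicator (fun _ => (1:ℝ)) x * q x)
          rw [abs_mul, abs_of_nonneg (hp0 x)]
          by_cases hx : x ∈ T
          · rw [Set.indicator_of_mem hx, one_mul]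
            calc p x * |f x| ≤ q x * C :=
                  mul_le_mul (hpq x) (by simpa using hC x) (abs_nonneg _) (hq0 x)
              _ = C * q x := mul_comm _ _
          · rw [image_eq_zero_of_notMem_tsupport hx, abs_zero, mul_zero,
              Set.indicator_of_notMem hx, zero_mul, mul_zero]
      _ = C * ∫ x, T.indicator (fun _ => (1:ℝ)) x * q x := integral_const_mul C _
      _ = C * ∫ x, ∫ y, h₂ (x, y) ∂μ := by
          congr 1
          apply integral_congr_ae
          apply Filter.EventuallyEq.of_eq
          funext x
          simp only [hh₂def, hqdef, hρmdef, integral_const_mul]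
      _ = C * ∫ y, (∫ x, h₂ (x, y)) ∂μ := by
          rw [integral_integral_swap hh₂int]
      _ ≤ C * ∫ y, K.indicator (fun _ => ν / 2) y ∂μ := by
          apply mul_le_mul_of_nonneg_left _ hC0
          apply integral_mono hqint _ hqind
          rw [integrable_indicator_iff hKmeas]
          exact integrableOn_const hμKlt.ne
      _ = C * (μK * (ν / 2)) := by
          rw [integral_indicator_const _ hKmeas, smul_eq_mul, measureReal_def]
      _ = C * (ν / 2 * μK) := by ring
  -- put everything together
  have hsplit : (∫ x, max (u x) 0 * f x) = (∫ x, u x * f x) + ∫ x, p x * f x := by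
    rw [← integral_add huf_int hpf_int]
    congr 1
    funext x
    simp only [hpdef]
    ring
  have hgoal : (∫ x, max (∫ y, (ε ^ n)⁻¹ * ψ ε (ε⁻¹ • (x - y)) ∂μ) 0 * f x)
      = ∫ x, max (u x) 0 * f x := rfl
  rw [Real.dist_eq, hgoal, hsplit, hswap₁]
  have harith1 : (1 + ν) * δ' * μK ≤ δ / 4 := by
    have key : (1 + ν) * δ' * (μK + 1) = δ / 4 := by
      rw [hδ'def]
      field_simp
    nlinarith [hνpos.le, hδ'pos.le, hμK0]
  have harith2 : C * (ν / 2 * μK) ≤ δ / 4 := by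
    have key : ν * ((C + 1) * (μK + 1)) = δ / 4 := by
      rw [hνdef]
      field_simp
    nlinarith [hνpos.le, hC0, hμK0]
  calc |(∫ y, G y ∂μ) + (∫ x, p x * f x) - ∫ x, f x ∂μ|
      ≤ |(∫ y, G y ∂μ) - ∫ y, f y ∂μ| + |∫ x, p x * f x| := by
        rw [add_sub_right_comm]
        exact abs_add_le _ _
    _ ≤ δ / 4 + δ / 4 := add_le_add (le_trans hbound1 harith1) (le_trans hbound2 harith2)
    _ < δ := by linarith
end

section
/- Let η : ℝ → ℝ be smooth such that its zero set is a finite set {x_1, …, x_k} with η'(x_l) ≠ 0 for each l. Let ψ ∈ C_c^∞(ℝ) with supp ψ ⊆ [−1,1] and ∫ψ = 1, and set ρ_ε(t) := ε^{−1} ψ(t/ε). Then for every smooth compactly supported f : ℝ → ℝ one has lim_{ε→0⁺} ∫_ℝ ρ_ε(η(x)) f(x) dx = ∑_{l=1}^k f(x_l) / |η'(x_l)|. -/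
open MeasureTheory Filter Topology

lemma aux_mvt (g : ℝ → ℝ) (hg : Differentiable ℝ g) (x₀ r m : ℝ)
    (hm : ∀ t ∈ Set.Icc (x₀ - r) (x₀ + r), m ≤ |deriv g t|) :
    ∀ t ∈ Set.Icc (x₀ - r) (x₀ + r), m * |t - x₀| ≤ |g t - g x₀| := by
  intro t ht
  obtain ⟨ht1, ht2⟩ := ht
  rcases lt_trichotomy t x₀ with h | h | h
  · have hr : 0 < r := by linarith
    obtain ⟨ξ, hξ, hslope⟩ := exists_deriv_eq_slope g h hg.continuous.continuousOn
      (fun y _ => (hg y).differentiableWithinAt)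
    have hξI : ξ ∈ Set.Icc (x₀ - r) (x₀ + r) :=
      ⟨by linarith [hξ.1], by linarith [hξ.2]⟩
    have hb := hm ξ hξI
    rw [hslope, abs_div] at hb
    rw [abs_of_pos (by linarith : (0:ℝ) < x₀ - t), le_div_iff₀ (by linarith)] at hb
    have h1 : |t - x₀| = x₀ - t := by rw [abs_of_nonpos (by linarith)]; ring
    rw [h1, abs_sub_comm]
    linarith
  · simp [h]
  · have hr : 0 < r := by linarith
    obtain ⟨ξ, hξ, hslope⟩ := exists_deriv_eq_slope g h hg.continuous.continuousOn
      (fun y _ => (hg y).differentiableWithinAt)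
    have hξI : ξ ∈ Set.Icc (x₀ - r) (x₀ + r) :=
      ⟨by linarith [hξ.1], by linarith [hξ.2]⟩
    have hb := hm ξ hξI
    rw [hslope, abs_div] at hb
    rw [abs_of_pos (by linarith : (0:ℝ) < t - x₀), le_div_iff₀ (by linarith)] at hb
    rw [abs_of_pos (by linarith : (0:ℝ) < t - x₀)]
    linarith

lemma delta_core (η : ℝ → ℝ) (hη : Differentiable ℝ η)
    (ψ : ℝ → ℝ) (hψ : Continuous ψ) (hψc : HasCompactSupport ψ)
    (hψ_supp : tsupport ψ ⊆ Set.Icc (-1:ℝ) 1) (hψ_int : ∫ t, ψ t = 1)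
    (f : ℝ → ℝ) (hf : Continuous f) (Cf : ℝ) (hCf : ∀ y, |f y| ≤ Cf)
    (x₀ r m : ℝ) (hr : 0 < r) (hm : 0 < m) (hx₀ : η x₀ = 0)
    (hmd : ∀ t ∈ Set.Icc (x₀ - r) (x₀ + r), m ≤ |deriv η t|) :
    Tendsto (fun ε : ℝ => ∫ t in Set.Ioo (x₀ - r) (x₀ + r), ε⁻¹ * ψ (η t / ε) * f t)
      (𝓝[>] (0:ℝ)) (𝓝 (f x₀ / |deriv η x₀|)) := by
  obtain ⟨Cψ, hCψ⟩ := hψc.exists_bound_of_continuous hψ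
  have hc0 : (0:ℝ) < |deriv η x₀| :=
    lt_of_lt_of_le hm (hmd x₀ ⟨by linarith, by linarith⟩)
  have hCψ0 : 0 ≤ Cψ := le_trans (norm_nonneg (ψ 0)) (hCψ 0)
  have hCf0 : 0 ≤ Cf := le_trans (abs_nonneg (f 0)) (hCf 0)
  -- change of variables
  have key : ∀ ε ∈ Set.Ioi (0:ℝ),
      ∫ t in Set.Ioo (x₀ - r) (x₀ + r), ε⁻¹ * ψ (η t / ε) * f t
        = ∫ s, Set.indicator (Set.Ioo (x₀ - r) (x₀ + r))
            (fun t => ψ (η t / ε) * f t) (x₀ + ε * s) := by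
    intro ε hε
    rw [Set.mem_Ioi] at hε
    have h1 : ∫ t in Set.Ioo (x₀ - r) (x₀ + r), ε⁻¹ * ψ (η t / ε) * f t
        = ε⁻¹ * ∫ t, Set.indicator (Set.Ioo (x₀ - r) (x₀ + r))
            (fun t => ψ (η t / ε) * f t) t := by
      rw [integral_indicator measurableSet_Ioo, ← integral_const_mul]
      congr 1; ext t; ring
    have h2 : (∫ s : ℝ, Set.indicator (Set.Ioo (x₀ - r) (x₀ + r))
          (fun t => ψ (η t / ε) * f t) (x₀ + ε * s))
        = |ε⁻¹| • ∫ y : ℝ, Set.indicator (Set.Ioo (x₀ - r) (x₀ + r))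
          (fun t => ψ (η t / ε) * f t) (x₀ + y) :=
      MeasureTheory.Measure.integral_comp_mul_left
        (fun y => Set.indicator (Set.Ioo (x₀ - r) (x₀ + r))
          (fun t => ψ (η t / ε) * f t) (x₀ + y)) ε
    have h3 : (∫ y : ℝ, Set.indicator (Set.Ioo (x₀ - r) (x₀ + r))
          (fun t => ψ (η t / ε) * f t) (x₀ + y))
        = ∫ t, Set.indicator (Set.Ioo (x₀ - r) (x₀ + r))
            (fun t => ψ (η t / ε) * f t) t :=
      integral_add_left_eq_self _ x₀
    rw [h1, h2, h3, abs_of_pos (inv_pos.2 hε), smul_eq_mul]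
  -- dominated convergence
  have hmain : Tendsto (fun ε : ℝ => ∫ s, Set.indicator (Set.Ioo (x₀ - r) (x₀ + r))
        (fun t => ψ (η t / ε) * f t) (x₀ + ε * s)) (𝓝[>] (0:ℝ))
      (𝓝 (∫ s, ψ (deriv η x₀ * s) * f x₀)) := by
    apply tendsto_integral_filter_of_dominated_convergence
      (Set.indicator (Set.Icc (-(1/m)) (1/m)) (fun _ => Cψ * Cf))
    · -- measurability
      filter_upwards [self_mem_nhdsWithin] with ε hε
      have heq : (fun s : ℝ => Set.indicator (Set.Ioo (x₀ - r) (x₀ + r))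
            (fun t => ψ (η t / ε) * f t) (x₀ + ε * s))
          = Set.indicator ((fun s : ℝ => x₀ + ε * s) ⁻¹' Set.Ioo (x₀ - r) (x₀ + r))
            (fun s => ψ (η (x₀ + ε * s) / ε) * f (x₀ + ε * s)) := by
        funext s
        by_cases h : x₀ + ε * s ∈ Set.Ioo (x₀ - r) (x₀ + r)
        · rw [Set.indicator_of_mem h, Set.indicator_of_mem (show s ∈ (fun s : ℝ => x₀ + ε * s) ⁻¹' Set.Ioo (x₀ - r) (x₀ + r) from h)]
        · rw [Set.indicator_of_notMem h,
            Set.indicator_of_notMem (show s ∉ (fun s : ℝ => x₀ + ε * s) ⁻¹' Set.Ioo (x₀ - r) (x₀ + r) from h)]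
      rw [heq]
      have hcont : Continuous (fun s : ℝ => ψ (η (x₀ + ε * s) / ε) * f (x₀ + ε * s)) := by
        have haff : Continuous (fun s : ℝ => x₀ + ε * s) :=
          continuous_const.add (continuous_const.mul continuous_id)
        exact ((hψ.comp ((hη.continuous.comp haff).div_const ε)).mul (hf.comp haff))
      exact hcont.aestronglyMeasurable.indicator
        (measurableSet_Ioo.preimage (continuous_const.add
          (continuous_const.mul continuous_id)).measurable)
    · -- bound
      filter_upwards [self_mem_nhdsWithin] with ε hε
      rw [Set.mem_Ioi] at hε
      filter_upwards with s
      by_cases h : x₀ + ε * s ∈ Set.Ioo (x₀ - r) (x₀ + r)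
      · rw [Set.indicator_of_mem h]
        by_cases hz : ψ (η (x₀ + ε * s) / ε) = 0
        · rw [hz, zero_mul, norm_zero]
          exact Set.indicator_apply_nonneg (fun _ => by positivity)
        · have hmem : η (x₀ + ε * s) / ε ∈ Set.Icc (-1:ℝ) 1 :=
            hψ_supp (subset_tsupport ψ hz)
          have habs : |η (x₀ + ε * s)| ≤ ε := by
            have h4 := abs_le.2 hmem
            rwa [abs_div, abs_of_pos hε, div_le_one hε] at h4
          have hIcc : x₀ + ε * s ∈ Set.Icc (x₀ - r) (x₀ + r) :=
            Set.Ioo_subset_Icc_self h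
          have hmvt := aux_mvt η hη x₀ r m hmd (x₀ + ε * s) hIcc
          rw [hx₀, sub_zero, add_sub_cancel_left, abs_mul, abs_of_pos hε] at hmvt
          have hs : |s| ≤ 1 / m := by
            rw [le_div_iff₀ hm]
            nlinarith
          have hsmem : s ∈ Set.Icc (-(1/m)) (1/m) := Set.mem_Icc.2 (abs_le.1 hs)
          rw [Set.indicator_of_mem hsmem]
          calc ‖ψ (η (x₀ + ε * s) / ε) * f (x₀ + ε * s)‖
              = |ψ (η (x₀ + ε * s) / ε)| * |f (x₀ + ε * s)| := abs_mul _ _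
            _ ≤ Cψ * Cf := mul_le_mul (hCψ _) (hCf _) (abs_nonneg _) hCψ0
      · rw [Set.indicator_of_notMem h, norm_zero]
        exact Set.indicator_apply_nonneg (fun _ => by positivity)
    · -- integrable bound
      exact (integrable_indicator_iff measurableSet_Icc).2
        (integrableOn_const measure_Icc_lt_top.ne)
    · -- pointwise limit
      filter_upwards with s
      have hA : Tendsto (fun ε : ℝ => η (x₀ + ε * s) / ε) (𝓝[>] (0:ℝ))
          (𝓝 (deriv η x₀ * s)) := by
        by_cases hs : s = 0
        · subst hs
          simp only [mul_zero, add_zero, hx₀, zero_div]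
          exact tendsto_const_nhds
        · have hd : HasDerivAt η (deriv η x₀) x₀ := (hη x₀).hasDerivAt
          have hslope := hasDerivAt_iff_tendsto_slope.1 hd
          have he : Tendsto (fun ε : ℝ => x₀ + ε * s) (𝓝[>] (0:ℝ)) (𝓝[≠] x₀) := by
            rw [tendsto_nhdsWithin_iff]
            refine ⟨?_, ?_⟩
            · have h5 : Tendsto (fun ε : ℝ => x₀ + ε * s) (𝓝 (0:ℝ)) (𝓝 x₀) := by
                have h6 := (continuous_const.add (continuous_id.mul continuous_const) :
                  Continuous (fun ε : ℝ => x₀ + ε * s)).tendsto (0:ℝ)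
                simpa [Pi.add_def] using h6
              exact h5.mono_left nhdsWithin_le_nhds
            · filter_upwards [self_mem_nhdsWithin] with ε hε
              rw [Set.mem_Ioi] at hε
              simp only [Set.mem_compl_iff, Set.mem_singleton_iff]
              intro h
              have h7 : ε * s = 0 := by linarith
              rcases mul_eq_zero.1 h7 with h' | h'
              · exact absurd h' (ne_of_gt hε)
              · exact hs h'
          have h3 : Tendsto (fun ε : ℝ => slope η x₀ (x₀ + ε * s) * s) (𝓝[>] (0:ℝ))
              (𝓝 (deriv η x₀ * s)) := (hslope.comp he).mul_const s
          apply Tendsto.congr' _ h3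
          filter_upwards [self_mem_nhdsWithin] with ε hε
          rw [Set.mem_Ioi] at hε
          rw [slope_def_field, hx₀, sub_zero, add_sub_cancel_left]
          field_simp
      have hεmem : ∀ᶠ ε in 𝓝[>] (0:ℝ), x₀ + ε * s ∈ Set.Ioo (x₀ - r) (x₀ + r) := by
        have hmem : Set.Ioo (0:ℝ) (r / (|s| + 1)) ∈ 𝓝[>] (0:ℝ) :=
          Ioo_mem_nhdsGT_of_mem ⟨le_refl _, by positivity⟩
        filter_upwards [hmem] with ε hε
        obtain ⟨hε1, hε2⟩ := hε
        have h1 : |ε * s| < r := by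
          rw [abs_mul, abs_of_pos hε1]
          calc ε * |s| ≤ ε * (|s| + 1) := by nlinarith [abs_nonneg s]
            _ < r / (|s| + 1) * (|s| + 1) := by
                apply mul_lt_mul_of_pos_right hε2; positivity
            _ = r := by field_simp
        have h2 := abs_lt.1 h1
        exact ⟨by linarith [h2.1], by linarith [h2.2]⟩
      have hlim2 : Tendsto (fun ε : ℝ => ψ (η (x₀ + ε * s) / ε) * f (x₀ + ε * s))
          (𝓝[>] (0:ℝ)) (𝓝 (ψ (deriv η x₀ * s) * f x₀)) := by
        apply Tendsto.mul
        · exact (hψ.tendsto _).comp hA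
        · have hx : Tendsto (fun ε : ℝ => x₀ + ε * s) (𝓝[>] (0:ℝ)) (𝓝 x₀) := by
            have h6 := (continuous_const.add (continuous_id.mul continuous_const) :
                Continuous (fun ε : ℝ => x₀ + ε * s)).tendsto (0:ℝ)
            exact (by simpa [Pi.add_def] using h6 : Tendsto (fun ε : ℝ => x₀ + ε * s) (𝓝 (0:ℝ)) (𝓝 x₀)).mono_left nhdsWithin_le_nhds
          exact (hf.tendsto _).comp hx
      apply Tendsto.congr' _ hlim2
      filter_upwards [hεmem] with ε hε
      rw [Set.indicator_of_mem hε]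
  -- identify the limit value
  have hval : ∫ s, ψ (deriv η x₀ * s) * f x₀ = f x₀ / |deriv η x₀| := by
    rw [integral_mul_const,
      MeasureTheory.Measure.integral_comp_mul_left ψ (deriv η x₀), hψ_int,
      smul_eq_mul, mul_one, abs_inv, div_eq_inv_mul, mul_comm]
  rw [hval] at hmain
  apply Tendsto.congr' _ hmain
  filter_upwards [self_mem_nhdsWithin] with ε hε
  exact (key ε hε).symm

/-- The classical formula `(δ∘η)(f) = ∑_l f(x_l)/|η'(x_l)|` for the composition of the
delta distribution with a function `η : ℝ → ℝ` having finitely many simple zeros. -/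
theorem delta_comp_eta_finitely_many_simple_zeros
    (η : ℝ → ℝ) (hη : ContDiff ℝ (⊤ : ℕ∞) η)
    (k : ℕ) (x : Fin k → ℝ) (hx_inj : Function.Injective x)
    (hzeros : {y : ℝ | η y = 0} = Set.range x)
    (hx_simple : ∀ l : Fin k, deriv η (x l) ≠ 0)
    (ψ : ℝ → ℝ) (hψ : ContDiff ℝ (⊤ : ℕ∞) ψ) (hψc : HasCompactSupport ψ)
    (hψ_supp : tsupport ψ ⊆ Set.Icc (-1:ℝ) 1) (hψ_int : ∫ t, ψ t = 1)
    (f : ℝ → ℝ) (hf : ContDiff ℝ (⊤ : ℕ∞) f) (hfc : HasCompactSupport f) :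
    Tendsto (fun ε : ℝ => ∫ t, ε⁻¹ * ψ (η t / ε) * f t) (𝓝[>] (0:ℝ))
      (𝓝 (∑ l : Fin k, f (x l) / |deriv η (x l)|)) := by
  have hηd : Differentiable ℝ η := hη.differentiable (by simp)
  have hψcont : Continuous ψ := hψ.continuous
  have hfcont : Continuous f := hf.continuous
  obtain ⟨Cf, hCf'⟩ := hfc.exists_bound_of_continuous hfcont
  have hCf : ∀ y, |f y| ≤ Cf := fun y => by
    have := hCf' y; rwa [Real.norm_eq_abs] at this
  have hηx : ∀ l : Fin k, η (x l) = 0 := fun l => by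
    have : x l ∈ {y : ℝ | η y = 0} := by rw [hzeros]; exact ⟨l, rfl⟩
    exact this
  -- separation radius
  obtain ⟨δ, hδpos, hδ⟩ : ∃ δ : ℝ, 0 < δ ∧ ∀ l l' : Fin k, l ≠ l' → 2 * δ ≤ |x l - x l'| := by
    set S := (Finset.univ.offDiag : Finset (Fin k × Fin k)) with hS
    by_cases hSn : S.Nonempty
    · obtain ⟨p, hp, hmin⟩ := S.exists_min_image (fun p => |x p.1 - x p.2|) hSn
      have hne : p.1 ≠ p.2 := (Finset.mem_offDiag.1 hp).2.2
      have hxne : x p.1 ≠ x p.2 := fun h => hne (hx_inj h)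
      have h2 : 0 < |x p.1 - x p.2| := abs_pos.2 (sub_ne_zero.2 hxne)
      refine ⟨|x p.1 - x p.2| / 4, by linarith, ?_⟩
      intro l l' hll
      have hmem : (l, l') ∈ S :=
        Finset.mem_offDiag.2 ⟨Finset.mem_univ _, Finset.mem_univ _, hll⟩
      have h1 := hmin (l, l') hmem
      simp only at h1
      linarith
    · exact ⟨1, one_pos, fun l l' hll =>
        absurd ⟨(l, l'), Finset.mem_offDiag.2 ⟨Finset.mem_univ _, Finset.mem_univ _, hll⟩⟩ hSn⟩
  -- local radii with derivative bounds
  have hrad : ∀ l : Fin k, ∃ ρ : ℝ, 0 < ρ ∧ ρ ≤ δ ∧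
      ∀ t ∈ Set.Icc (x l - ρ) (x l + ρ), |deriv η (x l)| / 2 ≤ |deriv η t| := by
    intro l
    have hcont : Continuous (fun t => |deriv η t|) := (hη.continuous_deriv (by simp)).abs
    have hev : ∀ᶠ t in 𝓝 (x l), |deriv η (x l)| / 2 < |deriv η t| :=
      (hcont.tendsto (x l)).eventually
        (eventually_gt_nhds (half_lt_self (abs_pos.2 (hx_simple l))))
    obtain ⟨ε, hεpos, hε⟩ := Metric.eventually_nhds_iff.1 hev
    refine ⟨min (ε / 2) δ, lt_min (by positivity) hδpos, min_le_right _ _, ?_⟩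
    intro t ht
    have h1 : |t - x l| ≤ min (ε / 2) δ := by
      rw [abs_le]; constructor <;> [linarith [ht.1]; linarith [ht.2]]
    have h2 : dist t (x l) < ε := by
      rw [Real.dist_eq]
      calc |t - x l| ≤ ε / 2 := le_trans h1 (min_le_left _ _)
        _ < ε := by linarith
    exact le_of_lt (hε h2)
  choose ρ hρpos hρδ hρbound using hrad
  -- the compact set away from the zeros
  set K := tsupport f \ ⋃ l, Set.Ioo (x l - ρ l) (x l + ρ l) with hK
  have hKc : IsCompact K := hfc.diff (isOpen_iUnion fun l => isOpen_Ioo)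
  have hKη : ∀ t ∈ K, (0:ℝ) < |η t| := by
    intro t ht
    rw [abs_pos]
    intro h0
    have hmem : t ∈ {y : ℝ | η y = 0} := h0
    rw [hzeros] at hmem
    obtain ⟨l, rfl⟩ := hmem
    exact ht.2 (Set.mem_iUnion.2 ⟨l, ⟨by linarith [hρpos l], by linarith [hρpos l]⟩⟩)
  obtain ⟨c, hcpos, hc⟩ :=
    hKc.exists_forall_le' (continuous_abs.comp hηd.continuous).continuousOn hKη
  -- localization
  have hloc : ∀ ε ∈ Set.Ioo (0:ℝ) c,
      ∫ t, ε⁻¹ * ψ (η t / ε) * f t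
        = ∑ l : Fin k, ∫ t in Set.Ioo (x l - ρ l) (x l + ρ l), ε⁻¹ * ψ (η t / ε) * f t := by
    intro ε hε
    obtain ⟨hε1, hε2⟩ := hε
    have h_pt : ∀ t : ℝ, ε⁻¹ * ψ (η t / ε) * f t
        = ∑ l : Fin k, Set.indicator (Set.Ioo (x l - ρ l) (x l + ρ l))
            (fun t => ε⁻¹ * ψ (η t / ε) * f t) t := by
      intro t
      by_cases hcase : ∃ l : Fin k, t ∈ Set.Ioo (x l - ρ l) (x l + ρ l)
      · obtain ⟨l₀, hl₀⟩ := hcase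
        rw [Finset.sum_eq_single l₀]
        · rw [Set.indicator_of_mem hl₀]
        · intro b _ hb
          apply Set.indicator_of_notMem
          intro hbmem
          have d1 : |t - x b| < ρ b := by
            rw [abs_lt]; exact ⟨by linarith [hbmem.1], by linarith [hbmem.2]⟩
          have d2 : |t - x l₀| < ρ l₀ := by
            rw [abs_lt]; exact ⟨by linarith [hl₀.1], by linarith [hl₀.2]⟩
          have := hδ b l₀ hb
          have habs : |x b - x l₀| ≤ |t - x b| + |t - x l₀| := by
            calc |x b - x l₀| = |(t - x l₀) - (t - x b)| := by ring_nf
              _ ≤ |t - x l₀| + |t - x b| := abs_sub _ _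
              _ = |t - x b| + |t - x l₀| := by ring
          have hb1 := hρδ b
          have hb2 := hρδ l₀
          linarith
        · intro h; exact absurd (Finset.mem_univ l₀) h
      · push_neg at hcase
        rw [Finset.sum_eq_zero (fun l _ => Set.indicator_of_notMem (hcase l) _)]
        by_cases hft : f t = 0
        · rw [hft, mul_zero]
        · have htK : t ∈ K := by
            refine ⟨subset_tsupport f hft, ?_⟩
            intro hmem
            obtain ⟨l, hl⟩ := Set.mem_iUnion.1 hmem
            exact hcase l hl
          have hη1 : c ≤ |η t| := hc t htK
          have : ψ (η t / ε) = 0 := by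
            apply image_eq_zero_of_notMem_tsupport
            intro hsupp
            have h8 := hψ_supp hsupp
            have h9 := abs_le.2 ⟨h8.1, h8.2⟩
            rw [abs_div, abs_of_pos hε1, div_le_one hε1] at h9
            have : |η t| < c := lt_of_le_of_lt h9 hε2
            linarith
          rw [this, mul_zero, zero_mul]
    have hint : ∀ l : Fin k, Integrable (Set.indicator (Set.Ioo (x l - ρ l) (x l + ρ l))
        (fun t => ε⁻¹ * ψ (η t / ε) * f t)) := by
      intro l
      rw [integrable_indicator_iff measurableSet_Ioo]
      have hcont : Continuous (fun t => ε⁻¹ * ψ (η t / ε) * f t) :=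
        ((continuous_const.mul (hψcont.comp (hηd.continuous.div_const ε))).mul hfcont)
      exact (hcont.integrableOn_Icc).mono_set Set.Ioo_subset_Icc_self
    calc ∫ t, ε⁻¹ * ψ (η t / ε) * f t
        = ∫ t, ∑ l : Fin k, Set.indicator (Set.Ioo (x l - ρ l) (x l + ρ l))
            (fun t => ε⁻¹ * ψ (η t / ε) * f t) t := by
          apply integral_congr_ae
          filter_upwards with t
          exact h_pt t
      _ = ∑ l : Fin k, ∫ t, Set.indicator (Set.Ioo (x l - ρ l) (x l + ρ l))
            (fun t => ε⁻¹ * ψ (η t / ε) * f t) t :=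
          integral_finset_sum _ (fun l _ => hint l)
      _ = ∑ l : Fin k, ∫ t in Set.Ioo (x l - ρ l) (x l + ρ l), ε⁻¹ * ψ (η t / ε) * f t :=
          Finset.sum_congr rfl (fun l _ => integral_indicator measurableSet_Ioo)
  -- combine
  have hsum : Tendsto (fun ε : ℝ => ∑ l : Fin k,
      ∫ t in Set.Ioo (x l - ρ l) (x l + ρ l), ε⁻¹ * ψ (η t / ε) * f t)
      (𝓝[>] (0:ℝ)) (𝓝 (∑ l : Fin k, f (x l) / |deriv η (x l)|)) := by
    apply tendsto_finset_sum
    intro l _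
    exact delta_core η hηd ψ hψcont hψc hψ_supp hψ_int f hfcont Cf hCf
      (x l) (ρ l) (|deriv η (x l)| / 2) (hρpos l)
      (half_pos (abs_pos.2 (hx_simple l))) (hηx l) (hρbound l)
  apply Tendsto.congr' _ hsum
  filter_upwards [Ioo_mem_nhdsGT_of_mem (Set.mem_Ico.2 ⟨le_refl (0:ℝ), hcpos⟩)] with ε hε
  exact (hloc ε hε).symm
end

section
/- Fix ψ ∈ C_c^∞(ℝ) with supp ψ ⊆ [−1,1] and ∫ψ = 1, and set ρ_ε(x) := ε^{−1} ψ(x/ε) for ε ∈ (0,1]. Then for every smooth compactly supported f : ℝ → ℝ one has lim_{ε→0⁺} ∫_ℝ ρ_ε(x) (θ∗ρ_ε)(x) f(x) dx = f(0)/2, where θ is the Heaviside function and (θ∗ρ_ε)(x) = ∫_{y ≤ x} ρ_ε(y) dy. -/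
open MeasureTheory Filter Topology

/-- The association `ι(δ)·ι(Θ) ≈ (1/2)·ι(δ)` in the Colombeau algebra: the product of
the delta net `ρ_ε` with the smoothed Heaviside net `θ∗ρ_ε` is associated to half the
delta distribution. -/
theorem delta_net_mul_heaviside_net_assoc_half_delta
    (ψ : ℝ → ℝ) (hψ : ContDiff ℝ (⊤ : ℕ∞) ψ) (hψc : HasCompactSupport ψ)
    (hψ_supp : tsupport ψ ⊆ Set.Icc (-1:ℝ) 1) (hψ_int : ∫ t, ψ t = 1)
    (f : ℝ → ℝ) (hf : ContDiff ℝ (⊤ : ℕ∞) f) (hfc : HasCompactSupport f) :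
    Tendsto
      (fun ε : ℝ => ∫ x, ε⁻¹ * ψ (x / ε) * (∫ y in Set.Iic x, ε⁻¹ * ψ (y / ε)) * f x)
      (𝓝[>] (0:ℝ)) (𝓝 (f 0 / 2)) := by
  have hψ_cont : Continuous ψ := hψ.continuous
  have hψ_int' : Integrable ψ := hψ_cont.integrable_of_hasCompactSupport hψc
  set G : ℝ → ℝ := fun u => ∫ t in Set.Iic u, ψ t with hG_def
  -- `G` is a primitive of `ψ`
  have hG_eq : G = fun u => ∫ t in (-2:ℝ)..u, ψ t := by
    funext u
    have h0 : (∫ t in Set.Iic (-2:ℝ), ψ t) = 0 := by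
      refine setIntegral_eq_zero_of_forall_eq_zero fun t ht => ?_
      refine image_eq_zero_of_notMem_tsupport fun hts => ?_
      have h1 := (hψ_supp hts).1
      simp only [Set.mem_Iic] at ht
      linarith
    have h2 := _root_.intervalIntegral.integral_Iic_sub_Iic
      (hψ_int'.integrableOn (s := Set.Iic (-2))) (hψ_int'.integrableOn (s := Set.Iic u))
    rw [hG_def]
    simp only [h0, sub_zero] at h2
    exact h2
  have hG_deriv : ∀ u : ℝ, HasDerivAt G (ψ u) u := by
    intro u
    rw [hG_eq]
    exact _root_.intervalIntegral.integral_hasDerivAt_right hψ_int'.intervalIntegrable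
      hψ_cont.stronglyMeasurable.stronglyMeasurableAtFilter hψ_cont.continuousAt
  have hG_cont : Continuous G := by
    refine continuous_iff_continuousAt.2 fun u => (hG_deriv u).continuousAt
  -- values of `G` at the endpoints
  have hG1 : G 1 = 1 := by
    rw [hG_def, ← hψ_int]
    refine setIntegral_eq_integral_of_forall_compl_eq_zero fun x hx => ?_
    refine image_eq_zero_of_notMem_tsupport fun hts => ?_
    have h2 := (hψ_supp hts).2
    simp only [Set.mem_Iic, not_le] at hx
    linarith
  have hGm1 : G (-1) = 0 := by
    have hc : G (-1) = ∫ t in Set.Iio (-1:ℝ), ψ t :=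
      (setIntegral_congr_set (MeasureTheory.Iio_ae_eq_Iic (a := (-1:ℝ)))).symm
    rw [hc]
    refine setIntegral_eq_zero_of_forall_eq_zero fun t ht => ?_
    refine image_eq_zero_of_notMem_tsupport fun hts => ?_
    have h1 := (hψ_supp hts).1
    simp only [Set.mem_Iio] at ht
    linarith
  -- key integral identity : ∫ ψ G = 1/2
  have key : (∫ u, ψ u * G u) = 1 / 2 := by
    have hsub : ∀ x, x ∉ Set.Icc (-1:ℝ) 1 → ψ x * G x = 0 := fun x hx => by
      rw [image_eq_zero_of_notMem_tsupport (fun h => hx (hψ_supp h)), zero_mul]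
    rw [← setIntegral_eq_integral_of_forall_compl_eq_zero hsub,
      MeasureTheory.integral_Icc_eq_integral_Ioc,
      ← _root_.intervalIntegral.integral_of_le (by norm_num : (-1:ℝ) ≤ 1)]
    have hchg := _root_.intervalIntegral.integral_comp_smul_deriv (a := (-1:ℝ)) (b := 1)
      (f := G) (f' := ψ) (g := id) (fun x _ => hG_deriv x) hψ_cont.continuousOn continuous_id
    simp only [smul_eq_mul, Function.comp_def, id_eq] at hchg
    rw [hchg, hGm1, hG1, integral_id]
    norm_num
  -- bounds
  obtain ⟨Cf, hCf⟩ := hfc.exists_bound_of_continuous hf.continuous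
  have hψabs_nonneg : (0:ℝ) ≤ ∫ t, |ψ t| := integral_nonneg fun t => abs_nonneg _
  have hGbd : ∀ u, |G u| ≤ ∫ t, |ψ t| := by
    intro u
    calc |G u| ≤ ∫ t in Set.Iic u, |ψ t| := by
          simpa [Real.norm_eq_abs] using
            norm_integral_le_integral_norm (μ := volume.restrict (Set.Iic u)) ψ
      _ ≤ ∫ t, |ψ t| :=
          setIntegral_le_integral hψ_int'.abs (ae_of_all _ fun t => abs_nonneg _)
  -- the rescaled integral equals `∫ u, ψ u * G u * f (ε * u)` for each `ε > 0`
  have heq : ∀ᶠ ε in 𝓝[>] (0:ℝ),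
      (∫ u, ψ u * G u * f (ε * u))
        = ∫ x, ε⁻¹ * ψ (x / ε) * (∫ y in Set.Iic x, ε⁻¹ * ψ (y / ε)) * f x := by
    filter_upwards [self_mem_nhdsWithin] with ε hε
    have hε : (0:ℝ) < ε := hε
    have hεinv : (0:ℝ) < ε⁻¹ := inv_pos.2 hε
    have hinner : ∀ x : ℝ, (∫ y in Set.Iic x, ε⁻¹ * ψ (y / ε)) = G (x / ε) := by
      intro x
      rw [MeasureTheory.integral_const_mul]
      have hrw : ∀ y : ℝ, ψ (y / ε) = ψ (ε⁻¹ • y) := fun y => by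
        rw [smul_eq_mul, ← div_eq_inv_mul]
      simp_rw [hrw]
      rw [Measure.setIntegral_comp_smul_of_pos volume ψ _ hεinv,
        LinearOrderedField.smul_Iic hεinv]
      simp only [Module.finrank_self, pow_one, inv_inv, smul_eq_mul, hG_def]
      rw [← mul_assoc, inv_mul_cancel₀ hε.ne', one_mul, div_eq_inv_mul]
    have houterrw : ∀ x : ℝ, ε⁻¹ * ψ (x / ε) * G (x / ε) * f x
        = ε⁻¹ * ((fun u => ψ u * G u * f (ε * u)) (x / ε)) := by
      intro x
      have hx : ε * (x / ε) = x := by field_simp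
      simp only [hx]
      ring
    simp_rw [hinner, houterrw]
    rw [MeasureTheory.integral_const_mul,
      Measure.integral_comp_div (fun u => ψ u * G u * f (ε * u)) ε,
      abs_of_pos hε, smul_eq_mul, ← mul_assoc, inv_mul_cancel₀ hε.ne', one_mul]
  -- limit of the model integral by dominated convergence
  have hlim : Tendsto (fun ε : ℝ => ∫ u, ψ u * G u * f (ε * u)) (𝓝[>] (0:ℝ))
      (𝓝 (f 0 / 2)) := by
    have h2 : f 0 / 2 = ∫ u, ψ u * G u * f 0 := by
      rw [MeasureTheory.integral_mul_const, key]; ring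
    rw [h2]
    refine tendsto_integral_filter_of_dominated_convergence
      (fun u => |ψ u| * ((∫ t, |ψ t|) * Cf)) ?_ ?_ ?_ ?_
    · filter_upwards with ε
      exact ((hψ_cont.mul hG_cont).mul
        (hf.continuous.comp (continuous_const.mul continuous_id))).aestronglyMeasurable
    · filter_upwards [self_mem_nhdsWithin] with ε hε
      filter_upwards with u
      have h1 : ‖f (ε * u)‖ ≤ Cf := hCf (ε * u)
      have h2 : |G u| * |f (ε * u)| ≤ (∫ t, |ψ t|) * Cf := by
        refine mul_le_mul (hGbd u) ?_ (abs_nonneg _) hψabs_nonneg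
        simpa [Real.norm_eq_abs] using h1
      calc ‖ψ u * G u * f (ε * u)‖ = |ψ u| * (|G u| * |f (ε * u)|) := by
            simp [Real.norm_eq_abs, abs_mul, mul_assoc]
        _ ≤ |ψ u| * ((∫ t, |ψ t|) * Cf) := by
            exact mul_le_mul_of_nonneg_left h2 (abs_nonneg _)
    · exact hψ_int'.abs.mul_const _
    · filter_upwards with u
      have hft : Tendsto (fun ε : ℝ => f (ε * u)) (𝓝[>] (0:ℝ)) (𝓝 (f 0)) := by
        have h3 : Tendsto (fun ε : ℝ => f (ε * u)) (𝓝 (0:ℝ)) (𝓝 (f (0 * u))) :=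
          (hf.continuous.comp (continuous_id.mul continuous_const)).tendsto 0
        simpa using h3.mono_left nhdsWithin_le_nhds
      exact hft.const_mul (ψ u * G u)
  exact hlim.congr' heq
end

section
/- Fix ψ ∈ C_c^∞(ℝ) with supp ψ ⊆ [−1,1] and ∫ψ = 1, and set ρ_ε(x) := ε^{−1} ψ(x/ε) for ε ∈ (0,1]. Then for every smooth compactly supported f : ℝ → ℝ one has lim_{ε→0⁺} ∫_ℝ ( (θ∗ρ_ε)(x) ρ_ε'(x) + ρ_ε(x)² ) f(x) dx = −f'(0)/2, where θ is the Heaviside function and (θ∗ρ_ε)(x) = ∫_{y ≤ x} ρ_ε(y) dy. -/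
open MeasureTheory Filter Topology

private theorem integral_Iic_comp_div' (g : ℝ → ℝ) (a : ℝ) {b : ℝ} (hb : 0 < b) :
    ∫ x in Set.Iic a, g (x / b) = b * ∫ x in Set.Iic (a / b), g x := by
  rw [← integral_indicator (measurableSet_Iic (a := a)),
    ← integral_indicator (measurableSet_Iic (a := a / b))]
  have key : (Set.Iic a).indicator (fun x => g (x / b))
      = fun x => (Set.Iic (a/b)).indicator g (b⁻¹ * x) := by
    ext x
    have hiff : x ≤ a ↔ x / b ≤ a / b := (div_le_div_iff_of_pos_right hb).symm
    simp only [Set.indicator_apply, Set.mem_Iic, inv_mul_eq_div]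
    by_cases h : x ≤ a
    · rw [if_pos h, if_pos (hiff.1 h)]
    · rw [if_neg h, if_neg (fun hc => h (hiff.2 hc))]
  rw [key, MeasureTheory.Measure.integral_comp_inv_mul_left
    (fun x => (Set.Iic (a/b)).indicator g x) b, abs_of_pos hb, smul_eq_mul]

/-- The association `ι(Θ)·ι(δ') + ι(δ)² ≈ (1/2)·ι(δ')` in the Colombeau algebra,
obtained by differentiating `ι(δ)·ι(Θ) ≈ (1/2)·ι(δ)`; here `ρ_ε'(x) = ε⁻² ψ'(x/ε)`. -/
theorem heaviside_net_mul_delta_net_deriv_assoc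
    (ψ : ℝ → ℝ) (hψ : ContDiff ℝ (⊤ : ℕ∞) ψ) (hψc : HasCompactSupport ψ)
    (hψ_supp : tsupport ψ ⊆ Set.Icc (-1:ℝ) 1) (hψ_int : ∫ t, ψ t = 1)
    (f : ℝ → ℝ) (hf : ContDiff ℝ (⊤ : ℕ∞) f) (hfc : HasCompactSupport f) :
    Tendsto
      (fun ε : ℝ => ∫ x,
        ((∫ y in Set.Iic x, ε⁻¹ * ψ (y / ε)) * ((ε ^ 2)⁻¹ * deriv ψ (x / ε))
          + (ε⁻¹ * ψ (x / ε)) ^ 2) * f x)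
      (𝓝[>] (0:ℝ)) (𝓝 (-(deriv f 0) / 2)) := by
  have hψcont : Continuous ψ := hψ.continuous
  have hψ'cont : Continuous (deriv ψ) := hψ.continuous_deriv (by simp)
  have hψint : Integrable ψ := hψcont.integrable_of_hasCompactSupport hψc
  have hfcont : Continuous f := hf.continuous
  have hf'cont : Continuous (deriv f) := hf.continuous_deriv (by simp)
  set Φ : ℝ → ℝ := fun t => ∫ y in Set.Iic t, ψ y with hΦdef
  -- ψ vanishes outside [-1,1]
  have hψ0 : ∀ t : ℝ, t ∉ Set.Icc (-1:ℝ) 1 → ψ t = 0 := fun t ht =>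
    image_eq_zero_of_notMem_tsupport (fun hc => ht (hψ_supp hc))
  -- derivative of Φ
  have hΦrepr : Φ = fun s => Φ (-2) + ∫ y in (-2:ℝ)..s, ψ y := by
    funext s
    have h := intervalIntegral.integral_Iic_sub_Iic (μ := volume) (f := ψ) (a := (-2:ℝ))
      (b := s) hψint.integrableOn hψint.integrableOn
    simp only [hΦdef]
    linarith
  have hΦd : ∀ t, HasDerivAt Φ (ψ t) t := by
    intro t
    rw [hΦrepr]
    exact ((intervalIntegral.integral_hasDerivAt_right
      hψint.intervalIntegrable
      hψcont.stronglyMeasurable.stronglyMeasurableAtFilter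
      hψcont.continuousAt).const_add _)
  have hΦcont : Continuous Φ := by
    rw [continuous_iff_continuousAt]; exact fun t => (hΦd t).continuousAt
  -- values of Φ
  have hΦ_one : ∀ t : ℝ, 1 ≤ t → Φ t = 1 := by
    intro t ht
    have h0 : ∫ y in Set.Ioi t, ψ y = 0 :=
      setIntegral_eq_zero_of_forall_eq_zero fun x hx =>
        hψ0 x (fun hc => absurd (ht.trans_lt hx) (not_lt.2 hc.2))
    have := intervalIntegral.integral_Iic_add_Ioi (μ := volume) (f := ψ) (b := t)
      hψint.integrableOn hψint.integrableOn
    rw [h0, add_zero] at this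
    rw [hΦdef]; simpa [hψ_int] using this
  have hΦ_zero : ∀ t : ℝ, t ≤ -1 → Φ t = 0 := by
    intro t ht
    have : Φ t = ∫ y in Set.Iio t, ψ y := integral_Iic_eq_integral_Iio
    rw [this]
    exact setIntegral_eq_zero_of_forall_eq_zero fun x hx =>
      hψ0 x (fun hc => by simp only [Set.mem_Iio] at hx; linarith [hc.1])
  -- integral of Φ ψ is 1/2
  have hΦψ_supp : Function.support (fun t => Φ t * ψ t) ⊆ Set.Ioc (-2:ℝ) 2 := by
    intro t ht
    by_contra hc
    have hz : ψ t = 0 := hψ0 t (fun hm => hc ⟨by linarith [hm.1], by linarith [hm.2]⟩)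
    exact ht (by simp [hz])
  have hΦψ_val : ∫ t, Φ t * ψ t = 1/2 := by
    rw [← intervalIntegral.integral_eq_integral_of_support_subset hΦψ_supp]
    have hderiv : ∀ t ∈ Set.uIcc (-2:ℝ) 2, HasDerivAt (fun s => Φ s ^ 2 / 2) (Φ t * ψ t) t := by
      intro t _
      have h := ((hΦd t).fun_pow 2).div_const 2
      refine h.congr_deriv ?_
      ring
    rw [intervalIntegral.integral_eq_sub_of_hasDerivAt hderiv
      ((hΦcont.mul hψcont).intervalIntegrable _ _)]
    rw [hΦ_one 2 (by norm_num), hΦ_zero (-2) (by norm_num)]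
    norm_num
  -- bound on deriv f
  obtain ⟨C, hC⟩ := (hfc.deriv).exists_bound_of_continuous hf'cont
  -- the key pointwise-in-ε identity
  have key : ∀ ε : ℝ, ε ∈ Set.Ioi (0:ℝ) →
      (∫ x, ((∫ y in Set.Iic x, ε⁻¹ * ψ (y / ε)) * ((ε ^ 2)⁻¹ * deriv ψ (x / ε))
          + (ε⁻¹ * ψ (x / ε)) ^ 2) * f x)
        = -∫ t, Φ t * ψ t * deriv f (ε * t) := by
    intro ε hε
    rw [Set.mem_Ioi] at hε
    have hΘ : ∀ x : ℝ, (∫ y in Set.Iic x, ε⁻¹ * ψ (y / ε)) = Φ (x / ε) := by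
      intro x
      rw [MeasureTheory.integral_const_mul, integral_Iic_comp_div' ψ x hε]
      rw [hΦdef]
      field_simp
    set u : ℝ → ℝ := fun x => Φ (x / ε) * (ε⁻¹ * ψ (x / ε)) with hu
    set u' : ℝ → ℝ := fun x =>
      Φ (x / ε) * ((ε ^ 2)⁻¹ * deriv ψ (x / ε)) + (ε⁻¹ * ψ (x / ε)) ^ 2 with hu'
    have hud : ∀ x, HasDerivAt u (u' x) x := by
      intro x
      have hin : HasDerivAt (fun y : ℝ => y / ε) (1 / ε) x := (hasDerivAt_id x).div_const ε
      have h1 : HasDerivAt (fun x : ℝ => Φ (x / ε)) (ψ (x / ε) * (1 / ε)) x :=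
        by have := (hΦd (x / ε)).comp x hin; exact this
      have h2 : HasDerivAt (fun x : ℝ => ψ (x / ε)) (deriv ψ (x / ε) * (1 / ε)) x :=
        ((hψ.differentiable (by simp) (x / ε)).hasDerivAt).comp x hin
      have h3 := h1.mul (h2.const_mul ε⁻¹)
      refine h3.congr_deriv ?_
      simp only [hu']
      field_simp
      ring
    have ucont : Continuous u :=
      (hΦcont.comp (continuous_id.div_const ε)).mul
        (continuous_const.mul (hψcont.comp (continuous_id.div_const ε)))
    have u'cont : Continuous u' :=
      ((hΦcont.comp (continuous_id.div_const ε)).mul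
        (continuous_const.mul (hψ'cont.comp (continuous_id.div_const ε)))).add
        ((continuous_const.mul (hψcont.comp (continuous_id.div_const ε))).pow 2)
    have hfd : ∀ x, HasDerivAt f (deriv f x) x := fun x =>
      (hf.differentiable (by simp) x).hasDerivAt
    have huv' : Integrable (u * deriv f) :=
      (ucont.mul hf'cont).integrable_of_hasCompactSupport (hfc.deriv).mul_left
    have hu'v : Integrable (u' * f) :=
      (u'cont.mul hfcont).integrable_of_hasCompactSupport hfc.mul_left
    have huv : Integrable (u * f) :=
      (ucont.mul hfcont).integrable_of_hasCompactSupport hfc.mul_left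
    have ibp := MeasureTheory.integral_mul_deriv_eq_deriv_mul_of_integrable
      (fun x _ => hud x) (fun x _ => hfd x) huv' hu'v huv
    have e1 : (fun x => ((∫ y in Set.Iic x, ε⁻¹ * ψ (y / ε)) * ((ε ^ 2)⁻¹ * deriv ψ (x / ε))
        + (ε⁻¹ * ψ (x / ε)) ^ 2) * f x) = fun x => u' x * f x := by
      funext x
      rw [hΘ x]
    rw [e1]
    have e2 : ∫ x, u' x * f x = -∫ x, u x * deriv f x := by linarith
    rw [e2]
    have e3 : ∫ x, u x * deriv f x = ∫ t, Φ t * ψ t * deriv f (ε * t) := by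
      have hcomp := MeasureTheory.Measure.integral_comp_inv_mul_left
        (fun t => Φ t * ψ t * deriv f (ε * t)) ε
      rw [abs_of_pos hε, smul_eq_mul] at hcomp
      have e4 : (fun x => u x * deriv f x)
          = fun x => ε⁻¹ * ((fun t => Φ t * ψ t * deriv f (ε * t)) (ε⁻¹ * x)) := by
        funext x
        have hx : ε * (ε⁻¹ * x) = x := by field_simp
        simp only [hu, hx, div_eq_inv_mul]
        ring
      rw [e4, MeasureTheory.integral_const_mul, hcomp]
      field_simp
    rw [e3]
  -- the limit of the transformed integral
  have hbound_int : Integrable (fun t => |Φ t * ψ t| * C) := by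
    refine ((hΦcont.mul hψcont).abs.mul continuous_const).integrable_of_hasCompactSupport
      (HasCompactSupport.intro (isCompact_Icc (a := (-1:ℝ)) (b := 1)) fun x hx => ?_)
    simp [hψ0 x hx]
  have lim0 : Tendsto (fun ε : ℝ => ∫ t, Φ t * ψ t * deriv f (ε * t)) (𝓝[>] (0:ℝ))
      (𝓝 (∫ t, Φ t * ψ t * deriv f 0)) := by
    refine tendsto_integral_filter_of_dominated_convergence (fun t => |Φ t * ψ t| * C)
      (Eventually.of_forall fun ε => ?_) (Eventually.of_forall fun ε => ?_) hbound_int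
      (Eventually.of_forall fun t => ?_)
    · exact ((hΦcont.mul hψcont).mul
        (hf'cont.comp (continuous_const.mul continuous_id))).aestronglyMeasurable
    · refine Eventually.of_forall fun t => ?_
      rw [Real.norm_eq_abs, abs_mul]
      exact mul_le_mul_of_nonneg_left (by simpa using hC (ε * t)) (abs_nonneg _)
    · have h1 : Tendsto (fun ε : ℝ => ε * t) (𝓝[>] (0:ℝ)) (𝓝 0) := by
        have h0 : Tendsto (fun ε : ℝ => ε * t) (𝓝 (0:ℝ)) (𝓝 ((0:ℝ) * t)) :=
          (continuous_id.mul continuous_const).tendsto 0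
        simpa using h0.mono_left nhdsWithin_le_nhds
      exact ((hf'cont.tendsto 0).comp h1).const_mul _
  have hval : (∫ t, Φ t * ψ t * deriv f 0) = deriv f 0 / 2 := by
    rw [MeasureTheory.integral_mul_const, hΦψ_val]
    ring
  rw [hval] at lim0
  have := lim0.neg
  rw [show -(deriv f 0 / 2) = -(deriv f 0) / 2 by ring] at this
  exact this.congr' ((eventually_mem_nhdsWithin).mono fun ε hε => (key ε hε).symm)
end

section
/- Fix ψ ∈ C_c^∞(ℝ) with supp ψ ⊆ [−1,1] and ∫ψ = 1, and set ρ_ε(x) := ε^{−1} ψ(x/ε) for ε ∈ (0,1]. Then for every smooth compactly supported f : ℝ → ℝ one has lim_{ε→0⁺} ∫_ℝ ( (θ∗ρ_ε)(x) ρ_ε''(x) + 3 ρ_ε(x) ρ_ε'(x) ) f(x) dx = f''(0)/2, where θ is the Heaviside function and (θ∗ρ_ε)(x) = ∫_{y ≤ x} ρ_ε(y) dy. -/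
open MeasureTheory Filter Topology

/-- Integration by parts on ℝ when `u` has compact support. -/
private lemma ibp_cs {u v u' v' : ℝ → ℝ}
    (hu : ∀ x, HasDerivAt u (u' x) x) (hv : ∀ x, HasDerivAt v (v' x) x)
    (hcu : HasCompactSupport u) (hu'c : Continuous u')
    (hvc : Continuous v) (hv'c : Continuous v') :
    ∫ x, u x * v' x = - ∫ x, u' x * v x := by
  have hud : Differentiable ℝ u := fun x => (hu x).differentiableAt
  have huc : Continuous u := hud.continuous
  have hu'cs : HasCompactSupport u' := by
    have h : u' = deriv u := funext fun x => ((hu x).deriv).symm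
    rw [h]; exact hcu.deriv
  exact integral_mul_deriv_eq_deriv_mul_of_integrable (fun x _ => hu x) (fun x _ => hv x)
    ((huc.mul hv'c).integrable_of_hasCompactSupport hcu.mul_right)
    ((hu'c.mul hvc).integrable_of_hasCompactSupport hu'cs.mul_right)
    ((huc.mul hvc).integrable_of_hasCompactSupport hcu.mul_right)

/-- The association `ι(Θ)·ι(δ'') + 3·ι(δ)·ι(δ') ≈ (1/2)·ι(δ'')` in the Colombeau
algebra, obtained by differentiating twice the association `ι(δ)·ι(Θ) ≈ (1/2)·ι(δ)`;
here `ρ_ε'(x) = ε⁻² ψ'(x/ε)` and `ρ_ε''(x) = ε⁻³ ψ''(x/ε)`. -/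
theorem heaviside_net_mul_delta_net_second_deriv_assoc
    (ψ : ℝ → ℝ) (hψ : ContDiff ℝ (⊤ : ℕ∞) ψ) (hψc : HasCompactSupport ψ)
    (hψ_supp : tsupport ψ ⊆ Set.Icc (-1:ℝ) 1) (hψ_int : ∫ t, ψ t = 1)
    (f : ℝ → ℝ) (hf : ContDiff ℝ (⊤ : ℕ∞) f) (hfc : HasCompactSupport f) :
    Tendsto
      (fun ε : ℝ => ∫ x,
        ((∫ y in Set.Iic x, ε⁻¹ * ψ (y / ε)) * ((ε ^ 3)⁻¹ * deriv (deriv ψ) (x / ε))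
          + 3 * (ε⁻¹ * ψ (x / ε)) * ((ε ^ 2)⁻¹ * deriv ψ (x / ε))) * f x)
      (𝓝[>] (0:ℝ)) (𝓝 (deriv (deriv f) 0 / 2)) := by
  -- basic smoothness facts
  have hψi : ContDiff ℝ (⊤:ℕ∞) ψ := hψ.of_le (by simp)
  have hfi : ContDiff ℝ (⊤:ℕ∞) f := hf.of_le (by simp)
  obtain ⟨hψdiff, hψ1⟩ := contDiff_infty_iff_deriv.mp hψi
  obtain ⟨hψ'diff, hψ2⟩ := contDiff_infty_iff_deriv.mp hψ1
  obtain ⟨hfdiff, hf1⟩ := contDiff_infty_iff_deriv.mp hfi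
  obtain ⟨hf'diff, hf2⟩ := contDiff_infty_iff_deriv.mp hf1
  have ψC : Continuous ψ := hψi.continuous
  have ψ'C : Continuous (deriv ψ) := hψ1.continuous
  have ψ''C : Continuous (deriv (deriv ψ)) := hψ2.continuous
  have f''C : Continuous (deriv (deriv f)) := hf2.continuous
  have hψd : ∀ x, HasDerivAt ψ (deriv ψ x) x := fun x => (hψdiff x).hasDerivAt
  have hψ'd : ∀ x, HasDerivAt (deriv ψ) (deriv (deriv ψ) x) x := fun x => (hψ'diff x).hasDerivAt
  have hψ'cs : HasCompactSupport (deriv ψ) := hψc.deriv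
  have hψ''cs : HasCompactSupport (deriv (deriv ψ)) := hψ'cs.deriv
  have hψint : Integrable ψ := ψC.integrable_of_hasCompactSupport hψc
  set Ψ : ℝ → ℝ := fun u => ∫ y in Set.Iic u, ψ y with hΨdef
  -- derivative of Ψ
  have key : ∀ u : ℝ, Ψ u = Ψ 0 + ∫ t in (0:ℝ)..u, ψ t := by
    intro u
    have h := intervalIntegral.integral_Iic_sub_Iic (hψint.integrableOn) (hψint.integrableOn)
      (a := (0:ℝ)) (b := u)
    simp only [hΨdef]
    linarith [h]
  have hΨd : ∀ u, HasDerivAt Ψ (ψ u) u := by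
    intro u
    have h1 : HasDerivAt (fun v => ∫ t in (0:ℝ)..v, ψ t) (ψ u) u :=
      intervalIntegral.integral_hasDerivAt_right (hψint.intervalIntegrable)
        (ψC.stronglyMeasurableAtFilter _ _) ψC.continuousAt
    have h2 := h1.const_add (Ψ 0)
    exact h2.congr_of_eventuallyEq (Eventually.of_forall fun v => key v)
  have hΨdiff : Differentiable ℝ Ψ := fun u => (hΨd u).differentiableAt
  have ΨC : Continuous Ψ := hΨdiff.continuous
  -- values of Ψ
  have hΨ_ge : ∀ u : ℝ, 1 ≤ u → Ψ u = 1 := by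
    intro u hu
    rw [← hψ_int]
    refine setIntegral_eq_integral_of_forall_compl_eq_zero fun x hx => ?_
    simp only [Set.mem_Iic, not_le] at hx
    refine image_eq_zero_of_notMem_tsupport fun hmem => ?_
    have := hψ_supp hmem
    simp only [Set.mem_Icc] at this
    linarith
  have hΨ_le : ∀ u : ℝ, u < -1 → Ψ u = 0 := by
    intro u hu
    have h0 : ∀ x ∈ Set.Iic u, ψ x = (0:ℝ) := by
      intro x hx
      simp only [Set.mem_Iic] at hx
      refine image_eq_zero_of_notMem_tsupport fun hmem => ?_
      have := hψ_supp hmem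
      simp only [Set.mem_Icc] at this
      linarith
    calc Ψ u = ∫ x in Set.Iic u, (0:ℝ) := setIntegral_congr_fun measurableSet_Iic h0
    _ = 0 := by simp
  -- the mass of Ψ·ψ
  have hΨψ_cs : HasCompactSupport (fun u => Ψ u * ψ u) := hψc.mul_left
  have intΨψ : Integrable (fun u => Ψ u * ψ u) :=
    (ΨC.mul ψC).integrable_of_hasCompactSupport hΨψ_cs
  have intA : (∫ u, Ψ u * ψ u) = 1 / 2 := by
    have hF : ∀ u, HasDerivAt (fun v => Ψ v ^ 2 / 2) (Ψ u * ψ u) u := by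
      intro u
      have h := ((hΨd u).mul (hΨd u)).div_const 2
      have he : (fun v => Ψ v ^ 2 / 2) = fun v => Ψ v * Ψ v / 2 := by funext v; ring
      rw [he]
      exact h.congr_deriv (by ring)
    have hbot : Tendsto (fun v : ℝ => Ψ v ^ 2 / 2) atBot (𝓝 (0:ℝ)) := by
      have he : (fun _ : ℝ => (0:ℝ)) =ᶠ[atBot] fun v => Ψ v ^ 2 / 2 := by
        filter_upwards [eventually_lt_atBot (-1:ℝ)] with v hv
        rw [hΨ_le v hv]; norm_num
      exact tendsto_const_nhds.congr' he
    have htop : Tendsto (fun v : ℝ => Ψ v ^ 2 / 2) atTop (𝓝 ((1:ℝ)/2)) := by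
      have he : (fun _ : ℝ => (1:ℝ)/2) =ᶠ[atTop] fun v => Ψ v ^ 2 / 2 := by
        filter_upwards [eventually_ge_atTop (1:ℝ)] with v hv
        rw [hΨ_ge v hv]; norm_num
      exact tendsto_const_nhds.congr' he
    have h := integral_of_hasDerivAt_of_tendsto hF intΨψ hbot htop
    rw [h]; ring
  -- main identity for each ε > 0
  have main_eq : ∀ ε : ℝ, 0 < ε →
      (∫ x, ((∫ y in Set.Iic x, ε⁻¹ * ψ (y / ε)) * ((ε ^ 3)⁻¹ * deriv (deriv ψ) (x / ε))
          + 3 * (ε⁻¹ * ψ (x / ε)) * ((ε ^ 2)⁻¹ * deriv ψ (x / ε))) * f x)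
      = ∫ u, Ψ u * ψ u * deriv (deriv f) (ε * u) := by
    intro ε hε
    have hεne : ε ≠ 0 := hε.ne'
    -- the inner integral is Ψ (x/ε)
    have hinner : ∀ x : ℝ, (∫ y in Set.Iic x, ε⁻¹ * ψ (y / ε)) = Ψ (x / ε) := by
      intro x
      rw [integral_const_mul]
      have h1 : (∫ y in Set.Iic x, ψ (y / ε))
          = ∫ y, Set.indicator (Set.Iic (x / ε)) ψ (y / ε) := by
        rw [← integral_indicator measurableSet_Iic]
        congr 1
        funext y
        by_cases h : y ≤ x
        · rw [Set.indicator_of_mem (Set.mem_Iic.mpr h),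
            Set.indicator_of_mem (Set.mem_Iic.mpr ((div_le_div_iff_of_pos_right hε).mpr h))]
        · have h2 : ¬ (y / ε ≤ x / ε) := fun hc => h ((div_le_div_iff_of_pos_right hε).mp hc)
          rw [Set.indicator_of_notMem (by simpa using h),
            Set.indicator_of_notMem (by simpa using h2)]
      rw [h1, Measure.integral_comp_div (Set.indicator (Set.Iic (x / ε)) ψ) ε,
        integral_indicator measurableSet_Iic, abs_of_pos hε, smul_eq_mul, hΨdef]
      field_simp
    -- functions appearing after rescaling
    have hlin : ∀ u : ℝ, HasDerivAt (fun v : ℝ => ε * v) ε u := by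
      intro u
      simpa using (hasDerivAt_id u).const_mul ε
    have hgd : ∀ u : ℝ, HasDerivAt (fun v => f (ε * v)) (deriv f (ε * u) * ε) u := by
      intro u
      exact ((hfdiff (ε * u)).hasDerivAt).comp u (hlin u)
    have hg'd : ∀ u : ℝ, HasDerivAt (fun v => deriv f (ε * v) * ε)
        (deriv (deriv f) (ε * u) * ε * ε) u := by
      intro u
      exact (((hf'diff (ε * u)).hasDerivAt).comp u (hlin u)).mul_const ε
    have gC : Continuous (fun v : ℝ => f (ε * v)) :=
      hfi.continuous.comp (continuous_const.mul continuous_id)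
    have g'C : Continuous (fun v : ℝ => deriv f (ε * v) * ε) :=
      (hf1.continuous.comp (continuous_const.mul continuous_id)).mul continuous_const
    have g''C : Continuous (fun v : ℝ => deriv (deriv f) (ε * v) * ε * ε) :=
      ((f''C.comp (continuous_const.mul continuous_id)).mul continuous_const).mul continuous_const
    -- the three integrations by parts
    have eq1 : ∫ x, (Ψ x * deriv ψ x) * (deriv f (ε * x) * ε)
        = - ∫ x, (ψ x * deriv ψ x + Ψ x * deriv (deriv ψ) x) * f (ε * x) :=
      ibp_cs (fun x => (hΨd x).mul (hψ'd x)) hgd hψ'cs.mul_left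
        ((ψC.mul ψ'C).add (ΨC.mul ψ''C)) gC g'C
    have eq2 : ∫ x, (Ψ x * ψ x) * (deriv (deriv f) (ε * x) * ε * ε)
        = - ∫ x, (ψ x * ψ x + Ψ x * deriv ψ x) * (deriv f (ε * x) * ε) :=
      ibp_cs (fun x => (hΨd x).mul (hψd x)) hg'd hψc.mul_left
        ((ψC.mul ψC).add (ΨC.mul ψ'C)) g'C g''C
    have eq3 : ∫ x, (ψ x * ψ x) * (deriv f (ε * x) * ε)
        = - ∫ x, (deriv ψ x * ψ x + ψ x * deriv ψ x) * f (ε * x) :=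
      ibp_cs (fun x => (hψd x).mul (hψd x)) hgd hψc.mul_left
        ((ψ'C.mul ψC).add (ψC.mul ψ'C)) gC g'C
    -- integrability of the pieces
    have iB : Integrable (fun x => ψ x * deriv ψ x * f (ε * x)) :=
      ((ψC.mul ψ'C).mul gC).integrable_of_hasCompactSupport
        (HasCompactSupport.mul_right (hψ'cs.mul_left))
    have iA : Integrable (fun x => Ψ x * deriv (deriv ψ) x * f (ε * x)) :=
      ((ΨC.mul ψ''C).mul gC).integrable_of_hasCompactSupport
        (HasCompactSupport.mul_right (hψ''cs.mul_left))
    have iD : Integrable (fun x => ψ x * ψ x * (deriv f (ε * x) * ε)) :=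
      ((ψC.mul ψC).mul g'C).integrable_of_hasCompactSupport
        (HasCompactSupport.mul_right (hψc.mul_left))
    have iC : Integrable (fun x => Ψ x * deriv ψ x * (deriv f (ε * x) * ε)) :=
      ((ΨC.mul ψ'C).mul g'C).integrable_of_hasCompactSupport
        (HasCompactSupport.mul_right (hψ'cs.mul_left))
    -- abbreviations
    set A := ∫ x, Ψ x * deriv (deriv ψ) x * f (ε * x) with hA
    set B := ∫ x, ψ x * deriv ψ x * f (ε * x) with hB
    -- eq3 : D = -2B
    have eq3' : (∫ x, ψ x * ψ x * (deriv f (ε * x) * ε)) = -(2 * B) := by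
      rw [eq3, hB, ← integral_const_mul 2]
      congr 1
      congr 1
      funext x
      ring
    -- eq1 : C = -(B + A)
    have eq1' : (∫ x, Ψ x * deriv ψ x * (deriv f (ε * x) * ε)) = -(B + A) := by
      rw [eq1, hA, hB, ← integral_add iB iA]
      congr 1
      congr 1
      funext x
      ring
    -- eq2 : E = A + 3B
    have eq2' : (∫ x, Ψ x * ψ x * (deriv (deriv f) (ε * x) * ε * ε)) = A + 3 * B := by
      rw [eq2]
      have hsplit : (∫ x, (ψ x * ψ x + Ψ x * deriv ψ x) * (deriv f (ε * x) * ε))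
          = (∫ x, ψ x * ψ x * (deriv f (ε * x) * ε))
            + ∫ x, Ψ x * deriv ψ x * (deriv f (ε * x) * ε) := by
        rw [← integral_add iD iC]
        congr 1
        funext x
        ring
      rw [hsplit, eq3', eq1']
      ring
    -- now combine with the change of variables
    have hcanc : ∀ x : ℝ, ε * (x / ε) = x := fun x => by field_simp
    calc
      (∫ x, ((∫ y in Set.Iic x, ε⁻¹ * ψ (y / ε)) * ((ε ^ 3)⁻¹ * deriv (deriv ψ) (x / ε))
            + 3 * (ε⁻¹ * ψ (x / ε)) * ((ε ^ 2)⁻¹ * deriv ψ (x / ε))) * f x)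
          = ∫ x, (fun u => (ε ^ 3)⁻¹ *
              ((Ψ u * deriv (deriv ψ) u + 3 * (ψ u * deriv ψ u)) * f (ε * u))) (x / ε) := by
        congr 1
        funext x
        rw [hinner x]
        simp only [hcanc x]
        ring
      _ = |ε| • ∫ u, (ε ^ 3)⁻¹ *
            ((Ψ u * deriv (deriv ψ) u + 3 * (ψ u * deriv ψ u)) * f (ε * u)) :=
        by exact Measure.integral_comp_div (fun u => (ε ^ 3)⁻¹ * ((Ψ u * deriv (deriv ψ) u + 3 * (ψ u * deriv ψ u)) * f (ε * u))) ε
      _ = ε * ((ε ^ 3)⁻¹ *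
            ∫ u, (Ψ u * deriv (deriv ψ) u + 3 * (ψ u * deriv ψ u)) * f (ε * u)) := by
        rw [abs_of_pos hε, smul_eq_mul, integral_const_mul]
      _ = ε * ((ε ^ 3)⁻¹ * (A + 3 * B)) := by
        rw [hA, hB]
        congr 2
        rw [← integral_const_mul 3, ← integral_add iA (iB.const_mul 3)]
        congr 1
        funext x
        ring
      _ = ε * ((ε ^ 3)⁻¹ * ∫ x, Ψ x * ψ x * (deriv (deriv f) (ε * x) * ε * ε)) := by
        rw [eq2']
      _ = ε * ((ε ^ 3)⁻¹ * (ε * ε * ∫ x, Ψ x * ψ x * deriv (deriv f) (ε * x))) := by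
        congr 2
        rw [← integral_const_mul (ε * ε)]
        congr 1
        funext x
        ring
      _ = ∫ u, Ψ u * ψ u * deriv (deriv f) (ε * u) := by
        field_simp
  -- the limit
  obtain ⟨M, hM⟩ := (hfc.deriv.deriv).exists_bound_of_continuous f''C
  have hlim : Tendsto (fun ε : ℝ => ∫ u, Ψ u * ψ u * deriv (deriv f) (ε * u))
      (𝓝[>] (0:ℝ)) (𝓝 (deriv (deriv f) 0 / 2)) := by
    have hval : (∫ u, Ψ u * ψ u * deriv (deriv f) 0) = deriv (deriv f) 0 / 2 := by
      rw [integral_mul_const, intA]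
      ring
    rw [← hval]
    apply tendsto_integral_filter_of_dominated_convergence
      (bound := fun u => ‖Ψ u * ψ u‖ * M)
    · filter_upwards with ε
      exact ((ΨC.mul ψC).mul
        (f''C.comp (continuous_const.mul continuous_id))).aestronglyMeasurable
    · filter_upwards with ε
      filter_upwards with u
      rw [norm_mul]
      exact mul_le_mul_of_nonneg_left (hM _) (norm_nonneg _)
    · exact ((ΨC.mul ψC).norm.mul continuous_const).integrable_of_hasCompactSupport
        (hΨψ_cs.norm.mul_right)
    · filter_upwards with u
      have h1 : Tendsto (fun ε : ℝ => ε * u) (𝓝[>] (0:ℝ)) (𝓝 0) := by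
        have := ((continuous_id.mul (continuous_const : Continuous fun _ : ℝ => u)).tendsto 0)
        simp only [Pi.mul_apply, id_eq, zero_mul] at this
        exact this.mono_left nhdsWithin_le_nhds
      exact ((f''C.tendsto 0).comp h1).const_mul _
  refine hlim.congr' ?_
  filter_upwards [self_mem_nhdsWithin] with ε hε
  exact (main_eq ε hε).symm
end

section
/- Fix ψ ∈ C_c^∞(ℝ) with supp ψ ⊆ [−1,1] and ∫ψ = 1, and set ρ_ε(x) := ε^{−1} ψ(x/ε) for ε ∈ (0,1]. Then for every smooth compactly supported f : ℝ → ℝ one has lim_{ε→0⁺} ∫_ℝ ( (2(θ∗ρ_ε)(x) − 1) ρ_ε'(x) + 2 ρ_ε(x)² ) f(x) dx = 0, where θ is the Heaviside function and (θ∗ρ_ε)(x) = ∫_{y ≤ x} ρ_ε(y) dy. -/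
open MeasureTheory Filter Topology

/-- The association `(2·ι(Θ) − 1)·ι(δ') + 2·ι(δ)² ≈ 0` in the Colombeau algebra,
i.e. `ι(Θ∘η)·ι(δ') − ι(Θ∘(−η))·ι(δ') ≈ −2·ι(δ)²`; here `ρ_ε'(x) = ε⁻² ψ'(x/ε)`. -/
theorem odd_heaviside_net_mul_delta_deriv_assoc
    (ψ : ℝ → ℝ) (hψ : ContDiff ℝ (⊤ : ℕ∞) ψ) (hψc : HasCompactSupport ψ)
    (hψ_supp : tsupport ψ ⊆ Set.Icc (-1:ℝ) 1) (hψ_int : ∫ t, ψ t = 1)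
    (f : ℝ → ℝ) (hf : ContDiff ℝ (⊤ : ℕ∞) f) (hfc : HasCompactSupport f) :
    Tendsto
      (fun ε : ℝ => ∫ x,
        ((2 * (∫ y in Set.Iic x, ε⁻¹ * ψ (y / ε)) - 1) * ((ε ^ 2)⁻¹ * deriv ψ (x / ε))
          + 2 * (ε⁻¹ * ψ (x / ε)) ^ 2) * f x)
      (𝓝[>] (0:ℝ)) (𝓝 0) := by
  have hψ_cont : Continuous ψ := hψ.continuous
  have hψ'_cont : Continuous (deriv ψ) := hψ.continuous_deriv (by simp)
  have hψ_intg : Integrable ψ := hψ_cont.integrable_of_hasCompactSupport hψc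
  have hψ0 : ∀ u : ℝ, u ∉ Set.Icc (-1:ℝ) 1 → ψ u = 0 := fun u hu =>
    image_eq_zero_of_notMem_tsupport (fun h => hu (hψ_supp h))
  have hf_cont : Continuous f := hf.continuous
  have hf'_cont : Continuous (deriv f) := hf.continuous_deriv (by simp)
  set H : ℝ → ℝ := fun u => ∫ t in Set.Iic u, ψ t with hHdef
  -- derivative of H
  have hH : ∀ u : ℝ, HasDerivAt H (ψ u) u := by
    intro u
    have key : ∀ v : ℝ, H v = H u + ∫ t in u..v, ψ t := by
      intro v
      have := intervalIntegral.integral_Iic_sub_Iic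
        (hψ_intg.integrableOn (s := Set.Iic u)) (hψ_intg.integrableOn (s := Set.Iic v))
      simp only [hHdef]
      linarith [this]
    have hd : HasDerivAt (fun v => H u + ∫ t in u..v, ψ t) (ψ u) u :=
      (intervalIntegral.integral_hasDerivAt_right (hψ_intg.intervalIntegrable)
        (hψ_cont.stronglyMeasurable.stronglyMeasurableAtFilter)
        hψ_cont.continuousAt).const_add (H u)
    have : H = fun v => H u + ∫ t in u..v, ψ t := funext key
    rw [this]
    exact hd
  have hH_cont : Continuous H := by
    refine continuous_iff_continuousAt.2 fun u => (hH u).continuousAt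
  have hH0 : ∀ u : ℝ, u < -1 → H u = 0 := by
    intro u hu
    apply setIntegral_eq_zero_of_forall_eq_zero
    intro t ht
    exact hψ0 t (fun h => absurd h.1 (by simp only [Set.mem_Iic] at ht; linarith))
  have hH1 : ∀ u : ℝ, 1 < u → H u = 1 := by
    intro u hu
    have h2 : ∫ t in Set.Ioi u, ψ t = 0 := by
      apply setIntegral_eq_zero_of_forall_eq_zero
      intro t ht
      exact hψ0 t (fun h => absurd h.2 (by simp only [Set.mem_Ioi] at ht; linarith))
    have := intervalIntegral.integral_Iic_add_Ioi (b := u)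
      (hψ_intg.integrableOn) (hψ_intg.integrableOn)
    simp only [hHdef]
    rw [hψ_int] at this
    linarith
  -- the odd part
  set h : ℝ → ℝ := fun u => (2 * H u - 1) * ψ u with hhdef
  have hh_cont : Continuous h := ((continuous_const.mul hH_cont).sub continuous_const).mul hψ_cont
  have hhc : HasCompactSupport h := hψc.mul_left
  have hh_intg : Integrable h := hh_cont.integrable_of_hasCompactSupport hhc
  -- ∫ h = 0
  have hh_int_zero : ∫ u, h u = 0 := by
    set Φ : ℝ → ℝ := fun u => H u ^ 2 - H u with hΦdef
    have hΦd : ∀ u : ℝ, HasDerivAt Φ (h u) u := by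
      intro u
      have h1 := ((hH u).pow 2).sub (hH u)
      refine h1.congr_deriv ?_
      simp [hhdef]
      ring
    have hbot : Tendsto Φ atBot (𝓝 0) := by
      apply tendsto_const_nhds.congr'
      filter_upwards [eventually_lt_atBot (-1:ℝ)] with x hx
      simp [hΦdef, hH0 x hx]
    have htop : Tendsto Φ atTop (𝓝 0) := by
      apply tendsto_const_nhds.congr'
      filter_upwards [eventually_gt_atTop (1:ℝ)] with x hx
      simp [hΦdef, hH1 x hx]
    have := integral_of_hasDerivAt_of_tendsto hΦd hh_intg hbot htop
    simpa using this
  -- derivative of h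
  have hψd : ∀ u : ℝ, HasDerivAt ψ (deriv ψ u) u :=
    fun u => (hψ.differentiable (by simp) u).hasDerivAt
  have hhd : ∀ u : ℝ, HasDerivAt h ((2 * H u - 1) * deriv ψ u + 2 * ψ u ^ 2) u := by
    intro u
    have h1 := (((hH u).const_mul 2).sub_const 1).mul (hψd u)
    refine h1.congr_deriv ?_
    ring
  -- bound for deriv f
  obtain ⟨C, hC⟩ := hfc.deriv.exists_bound_of_continuous hf'_cont
  have hC0 : 0 ≤ C := le_trans (norm_nonneg _) (hC 0)
  -- key identity for ε > 0
  have key : ∀ ε : ℝ, 0 < ε →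
      (∫ x, ((2 * (∫ y in Set.Iic x, ε⁻¹ * ψ (y / ε)) - 1) * ((ε ^ 2)⁻¹ * deriv ψ (x / ε))
          + 2 * (ε⁻¹ * ψ (x / ε)) ^ 2) * f x)
        = -∫ u, h u * deriv f (ε * u) := by
    intro ε hε
    have hεne : ε ≠ 0 := hε.ne'
    have hcε : Continuous fun x : ℝ => x / ε := continuous_id.div_const ε
    -- inner integral equals H (x/ε)
    have inner : ∀ x : ℝ, (∫ y in Set.Iic x, ε⁻¹ * ψ (y / ε)) = H (x / ε) := by
      intro x
      rw [integral_const_mul]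
      have e1 : (fun y : ℝ => ψ (y / ε)) = fun y : ℝ => ψ (ε⁻¹ • y) := by
        funext y; rw [smul_eq_mul, ← div_eq_inv_mul]
      rw [show (∫ y in Set.Iic x, ψ (y / ε)) = ∫ y in Set.Iic x, ψ (ε⁻¹ • y) from by
        rw [e1]]
      rw [Measure.setIntegral_comp_smul_of_pos volume ψ (Set.Iic x) (inv_pos.2 hε)]
      rw [LinearOrderedField.smul_Iic (inv_pos.2 hε)]
      simp only [Module.finrank_self, pow_one, inv_inv, smul_eq_mul]
      rw [← div_eq_inv_mul]
      field_simp
      rfl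
    -- the function g and its derivative
    set g : ℝ → ℝ := fun x => ε⁻¹ * h (x / ε) with hgdef
    set g' : ℝ → ℝ := fun x =>
      (ε ^ 2)⁻¹ * ((2 * H (x / ε) - 1) * deriv ψ (x / ε) + 2 * ψ (x / ε) ^ 2) with hg'def
    have hgd : ∀ x : ℝ, HasDerivAt g (g' x) x := by
      intro x
      have h1 : HasDerivAt (fun x : ℝ => x / ε) (1 / ε) x := (hasDerivAt_id x).div_const ε
      have h2 := ((hhd (x / ε)).comp x h1).const_mul ε⁻¹
      refine h2.congr_deriv ?_
      simp only [hg'def]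
      rw [pow_two ε, mul_inv]
      ring
    have hg_cont : Continuous g := continuous_const.mul (hh_cont.comp hcε)
    have hg'_cont : Continuous g' := by
      apply continuous_const.mul
      exact (((continuous_const.mul (hH_cont.comp hcε)).sub continuous_const).mul
        (hψ'_cont.comp hcε)).add (continuous_const.mul ((hψ_cont.comp hcε).pow 2))
    have hfd : ∀ x : ℝ, HasDerivAt f (deriv f x) x :=
      fun x => (hf.differentiable (by simp) x).hasDerivAt
    have hint1 : Integrable (f * g') :=
      (hf_cont.mul hg'_cont).integrable_of_hasCompactSupport (hfc.mul_right)
    have hint2 : Integrable (deriv f * g) :=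
      (hf'_cont.mul hg_cont).integrable_of_hasCompactSupport (hfc.deriv.mul_right)
    have hint3 : Integrable (f * g) :=
      (hf_cont.mul hg_cont).integrable_of_hasCompactSupport (hfc.mul_right)
    have ibp := integral_mul_deriv_eq_deriv_mul_of_integrable (fun x _ => hfd x) (fun x _ => hgd x) hint1 hint2 hint3
    -- rewrite the LHS integrand
    have e2 : (fun x => ((2 * (∫ y in Set.Iic x, ε⁻¹ * ψ (y / ε)) - 1)
          * ((ε ^ 2)⁻¹ * deriv ψ (x / ε)) + 2 * (ε⁻¹ * ψ (x / ε)) ^ 2) * f x)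
        = fun x => f x * g' x := by
      funext x
      rw [inner x]
      simp only [hg'def]
      field_simp
    rw [e2, ibp]
    congr 1
    -- substitution x = ε u
    have comp := Measure.integral_comp_div (fun u => h u * deriv f (ε * u)) ε
    calc ∫ x, deriv f x * g x
        = ∫ x, ε⁻¹ * ((fun u => h u * deriv f (ε * u)) (x / ε)) := by
          congr 1
          funext x
          simp only [hgdef]
          rw [mul_div_cancel₀ _ hεne]
          ring
      _ = ε⁻¹ * ∫ x, (fun u => h u * deriv f (ε * u)) (x / ε) :=
          integral_const_mul _ _
      _ = ε⁻¹ * (|ε| • ∫ u, h u * deriv f (ε * u)) := by rw [comp]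
      _ = ∫ u, h u * deriv f (ε * u) := by
          rw [abs_of_pos hε, smul_eq_mul, ← mul_assoc, inv_mul_cancel₀ hεne, one_mul]
  -- the limit
  have hlim : Tendsto (fun ε : ℝ => -∫ u, h u * deriv f (ε * u)) (𝓝[>] (0:ℝ)) (𝓝 0) := by
    have hmain : Tendsto (fun ε : ℝ => ∫ u, h u * deriv f (ε * u)) (𝓝[>] (0:ℝ))
        (𝓝 (∫ u, h u * deriv f 0)) := by
      apply tendsto_integral_filter_of_dominated_convergence (fun u => ‖h u‖ * C)
      · apply Eventually.of_forall
        intro ε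
        exact (hh_cont.mul (hf'_cont.comp (continuous_const.mul continuous_id))).aestronglyMeasurable
      · apply Eventually.of_forall
        intro ε
        apply Eventually.of_forall
        intro u
        rw [norm_mul]
        exact mul_le_mul_of_nonneg_left (hC _) (norm_nonneg _)
      · exact hh_intg.norm.mul_const C
      · apply Eventually.of_forall
        intro u
        have h1 : Tendsto (fun ε : ℝ => ε * u) (𝓝[>] (0:ℝ)) (𝓝 0) := by
          have := ((continuous_id.mul (continuous_const (y := u))).tendsto (0:ℝ))
          simp only [Pi.mul_apply, id_eq, zero_mul] at this
          exact this.mono_left nhdsWithin_le_nhds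
        exact (hf'_cont.continuousAt.tendsto.comp h1).const_mul (h u)
    have : (∫ u, h u * deriv f 0) = 0 := by
      rw [MeasureTheory.integral_mul_const, hh_int_zero, zero_mul]
    rw [this] at hmain
    simpa using hmain.neg
  apply hlim.congr'
  filter_upwards [self_mem_nhdsWithin] with ε hε
  exact (key ε hε).symm
end

section
/- Let U ⊆ ℝⁿ be open. Let (u_ε)_{ε∈(0,1]} be a net of locally integrable functions on U such that for every continuous compactly supported f : U → ℝ one has lim_{ε→0⁺} ∫_U min(u_ε(x), 0) f(x) dx = 0. Let (h_ε)_{ε∈(0,1]} be a net of continuous functions on U such that h_ε(x) > 0 for all x and ε, and such that for every compact K ⊆ U there is a constant Z with sup_{ε∈(0,1]} sup_{x∈K} h_ε(x) ≤ Z. Then for every continuous compactly supported f : U → ℝ one has lim_{ε→0⁺} ∫_U min(h_ε(x) u_ε(x), 0) f(x) dx = 0. -/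
open MeasureTheory Filter Topology

/-- Generalized non-negativity (vanishing of the negative part against all continuous
compactly supported test functions) is stable under multiplication by a uniformly
locally bounded net of positive continuous functions. -/
theorem gen_nonneg_stable_under_bounded_positive_mul
    {n : ℕ} (U : Set (EuclideanSpace ℝ (Fin n))) (hU : IsOpen U)
    (u : ℝ → EuclideanSpace ℝ (Fin n) → ℝ)
    (hu : ∀ ε ∈ Set.Ioc (0:ℝ) 1, LocallyIntegrableOn (u ε) U)
    (hu_neg : ∀ f : EuclideanSpace ℝ (Fin n) → ℝ,
      Continuous f → HasCompactSupport f → tsupport f ⊆ U →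
      Tendsto (fun ε : ℝ => ∫ x in U, min (u ε x) 0 * f x) (𝓝[>] (0:ℝ)) (𝓝 0))
    (h : ℝ → EuclideanSpace ℝ (Fin n) → ℝ)
    (hh_cont : ∀ ε ∈ Set.Ioc (0:ℝ) 1, ContinuousOn (h ε) U)
    (hh_pos : ∀ ε ∈ Set.Ioc (0:ℝ) 1, ∀ x ∈ U, 0 < h ε x)
    (hh_bdd : ∀ K : Set (EuclideanSpace ℝ (Fin n)), IsCompact K → K ⊆ U →
      ∃ Z : ℝ, ∀ ε ∈ Set.Ioc (0:ℝ) 1, ∀ x ∈ K, h ε x ≤ Z) :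
    ∀ f : EuclideanSpace ℝ (Fin n) → ℝ,
      Continuous f → HasCompactSupport f → tsupport f ⊆ U →
      Tendsto (fun ε : ℝ => ∫ x in U, min (h ε x * u ε x) 0 * f x)
        (𝓝[>] (0:ℝ)) (𝓝 0) := by
  intro f hf hfc hfU
  set K := tsupport f with hK
  obtain ⟨Z₀, hZ₀⟩ := hh_bdd K hfc hfU
  set Z : ℝ := max Z₀ 0 with hZdef
  have hZnn : 0 ≤ Z := le_max_right _ _
  have hZ : ∀ ε ∈ Set.Ioc (0:ℝ) 1, ∀ x ∈ K, h ε x ≤ Z :=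
    fun ε hε x hx => (hZ₀ ε hε x hx).trans (le_max_left _ _)
  -- the test function |f|
  have habs_cont : Continuous fun x => |f x| := hf.abs
  have habs_supp : HasCompactSupport fun x => |f x| := hfc.abs
  have habs_tsupp : tsupport (fun x => |f x|) ⊆ U := by
    refine (closure_mono ?_).trans hfU
    intro x hx
    simp only [Function.mem_support, abs_ne_zero] at hx
    exact hx
  have hg := hu_neg (fun x => |f x|) habs_cont habs_supp habs_tsupp
  -- bound on |f|
  obtain ⟨C, hC⟩ : ∃ C : ℝ, ∀ x, ‖f x‖ ≤ C := hf.bounded_above_of_compact_support hfc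
  -- squeeze
  refine squeeze_zero_norm' ?_ (by simpa using (hg.const_mul Z).neg)
  have hmem : ∀ᶠ ε : ℝ in 𝓝[>] 0, ε ∈ Set.Ioc (0:ℝ) 1 := by
    filter_upwards [Ioc_mem_nhdsGT one_pos] with ε hε using hε
  filter_upwards [hmem] with ε hε
  -- integrability of the dominating function
  have hintK : IntegrableOn (u ε) K := (hu ε hε).integrableOn_compact_subset hfU hfc
  have hminK : IntegrableOn (fun x => min (u ε x) 0) K := by
    have := hintK.inf (integrable_zero _ _ _)
    exact this
  have hprodK : IntegrableOn (fun x => min (u ε x) 0 * |f x|) K := by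
    have := hminK.bdd_mul (f := fun x => |f x|) (c := C) hf.abs.aestronglyMeasurable.restrict
      (ae_of_all _ fun x => by simpa [abs_abs] using hC x)
    exact this.congr (ae_of_all _ fun x => mul_comm (|f x|) (min (u ε x) 0))
  have hprodU : IntegrableOn (fun x => min (u ε x) 0 * |f x|) U := by
    have h0 : ∀ x ∈ U \ K, min (u ε x) 0 * |f x| = 0 := by
      intro x hx
      have : f x = 0 := image_eq_zero_of_notMem_tsupport hx.2
      simp [this]
    have h1 : IntegrableOn (fun x => min (u ε x) 0 * |f x|) (U \ K) :=
      (integrableOn_congr_fun h0 (hU.measurableSet.diff (isClosed_tsupport f).measurableSet)).mpr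
        (integrableOn_zero)
    have h2 : IntegrableOn (fun x => min (u ε x) 0 * |f x|) (U ∩ K) :=
      hprodK.mono_set Set.inter_subset_right
    have hUsplit : U = (U ∩ K) ∪ (U \ K) := by
      ext x; by_cases hx : x ∈ K <;> simp [hx]
    rw [hUsplit]
    exact h2.union h1
  -- the pointwise bound
  have hb : ‖∫ x in U, min (h ε x * u ε x) 0 * f x‖
      ≤ ∫ x in U, Z * (-(min (u ε x) 0 * |f x|)) := by
    refine norm_integral_le_of_norm_le ((hprodU.neg.const_mul Z)) ?_
    filter_upwards [ae_restrict_mem hU.measurableSet] with x hxU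
    by_cases hfx : f x = 0
    · simp [hfx]
    · have hxK : x ∈ K := subset_closure (by simpa [Function.mem_support] using hfx)
      have hhx : 0 < h ε x := hh_pos ε hε x hxU
      have hhZ : h ε x ≤ Z := hZ ε hε x hxK
      have hm : min (u ε x) 0 ≤ 0 := min_le_right _ _
      have hmin : min (h ε x * u ε x) 0 = h ε x * min (u ε x) 0 := by
        rw [mul_min_of_nonneg _ _ hhx.le, mul_zero]
      rw [hmin, Real.norm_eq_abs, abs_mul, abs_mul,
        abs_of_nonneg hhx.le, abs_of_nonpos hm]
      nlinarith [mul_nonneg (mul_nonneg (sub_nonneg.2 hhZ) (neg_nonneg.2 hm)) (abs_nonneg (f x))]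
  calc ‖∫ x in U, min (h ε x * u ε x) 0 * f x‖
      ≤ ∫ x in U, Z * (-(min (u ε x) 0 * |f x|)) := hb
    _ = -(Z * ∫ x in U, min (u ε x) 0 * |f x|) := by
        simp [integral_const_mul, integral_neg, mul_neg]
end

section
/- Let U ⊆ ℝⁿ be open and let (g_ε)_{ε∈(0,1]} be a net of smooth functions g_ε : U → (0,∞). Assume: (1) for every compact K ⊆ U there exist ε₀ ∈ (0,1] and q ∈ ℕ such that inf_{x∈K} g_ε(x) ≥ ε^q for all ε < ε₀; (2) for every compact K ⊆ U and every k ∈ ℕ there exists N ∈ ℕ such that sup_{x∈K} ‖D^k g_ε(x)‖ = O(ε^{−N}) as ε → 0⁺, where D^k denotes the k-th iterated (Fréchet) derivative. Then the net (√g_ε) of smooth functions is moderate: for every compact K ⊆ U and every k ∈ ℕ there exists N' ∈ ℕ such that sup_{x∈K} ‖D^k (√g_ε)(x)‖ = O(ε^{−N'}) as ε → 0⁺. -/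
open Filter Topology

noncomputable def sqrtDC : ℕ → ℝ
  | 0 => 1
  | (k+1) => sqrtDC k * ((1:ℝ)/2 - k)

lemma iteratedDeriv_sqrt (k : ℕ) : ∀ x : ℝ, 0 < x →
    iteratedDeriv k Real.sqrt x = sqrtDC k * x ^ ((1:ℝ)/2 - k) := by
  induction k with
  | zero => intro x hx; simp [sqrtDC, Real.sqrt_eq_rpow]
  | succ k ih =>
    intro x hx
    rw [iteratedDeriv_succ]
    have heq : iteratedDeriv k Real.sqrt =ᶠ[𝓝 x] fun y => sqrtDC k * y ^ ((1:ℝ)/2 - k) :=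
      Filter.eventuallyEq_of_mem (Ioi_mem_nhds hx) (fun y hy => ih y hy)
    rw [heq.deriv_eq]
    have h := (Real.hasDerivAt_rpow_const (p := (1:ℝ)/2 - k) (Or.inl hx.ne')).const_mul (sqrtDC k)
    rw [h.deriv]
    have he : (1:ℝ)/2 - k - 1 = 1/2 - ((k:ℝ)+1) := by ring
    rw [he]
    simp [sqrtDC]
    ring

/-- The square root of a strictly positive net of smooth functions which is moderate and
satisfies the invertibility estimate `inf_K g_ε ≥ ε^q` is again moderate, i.e. defines
an element of the Colombeau algebra. -/
theorem sqrt_of_generalized_metric_component_is_moderate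
    {n : ℕ} (U : Set (EuclideanSpace ℝ (Fin n))) (hU : IsOpen U)
    (g : ℝ → EuclideanSpace ℝ (Fin n) → ℝ)
    (hg_smooth : ∀ ε ∈ Set.Ioc (0:ℝ) 1, ContDiffOn ℝ (⊤ : ℕ∞) (g ε) U)
    (hg_pos : ∀ ε ∈ Set.Ioc (0:ℝ) 1, ∀ x ∈ U, 0 < g ε x)
    (hg_inv : ∀ K : Set (EuclideanSpace ℝ (Fin n)), IsCompact K → K ⊆ U →
      ∃ ε₀ ∈ Set.Ioc (0:ℝ) 1, ∃ q : ℕ, ∀ ε : ℝ, 0 < ε → ε < ε₀ →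
        ∀ x ∈ K, ε ^ q ≤ g ε x)
    (hg_mod : ∀ K : Set (EuclideanSpace ℝ (Fin n)), IsCompact K → K ⊆ U →
      ∀ k : ℕ, ∃ N : ℕ, ∃ C : ℝ, ∀ᶠ ε in 𝓝[>] (0:ℝ),
        ∀ x ∈ K, ‖iteratedFDerivWithin ℝ k (g ε) U x‖ ≤ C * (ε ^ N)⁻¹) :
    ∀ K : Set (EuclideanSpace ℝ (Fin n)), IsCompact K → K ⊆ U →
      ∀ k : ℕ, ∃ N' : ℕ, ∃ C : ℝ, ∀ᶠ ε in 𝓝[>] (0:ℝ),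
        ∀ x ∈ K, ‖iteratedFDerivWithin ℝ k (fun y => Real.sqrt (g ε y)) U x‖
          ≤ C * (ε ^ N')⁻¹ := by
  intro K hK hKU k
  obtain ⟨ε₀, hε₀, q, hq⟩ := hg_inv K hK hKU
  choose N C hNC using fun i => hg_mod K hK hKU i
  set Nm := (Finset.range (k+1)).sup N with hNmdef
  set Cm := ∑ i ∈ Finset.range (k+1), |C i| with hCmdef
  set A := (∑ i ∈ Finset.range (k+1), |sqrtDC i|) + (1 + Cm) with hAdef
  refine ⟨q*k + Nm + Nm*k, (Nat.factorial k : ℝ) * A * (1+Cm)^k, ?_⟩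
  have hev : ∀ᶠ ε in 𝓝[>] (0:ℝ), ∀ i ∈ Finset.range (k+1),
      ∀ x ∈ K, ‖iteratedFDerivWithin ℝ i (g ε) U x‖ ≤ C i * (ε ^ N i)⁻¹ :=
    (eventually_all_finset _).2 fun i _ => hNC i
  filter_upwards [hev, Ioo_mem_nhdsGT hε₀.1] with ε hevε hεI
  intro x hx
  have hεpos : 0 < ε := hεI.1
  have hε1 : ε ≤ 1 := le_of_lt (lt_of_lt_of_le hεI.2 hε₀.2)
  have hεIoc : ε ∈ Set.Ioc (0:ℝ) 1 := ⟨hεpos, hε1⟩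
  have hCm0 : 0 ≤ Cm := Finset.sum_nonneg fun i _ => abs_nonneg _
  have hSD0 : 0 ≤ ∑ i ∈ Finset.range (k+1), |sqrtDC i| :=
    Finset.sum_nonneg fun i _ => abs_nonneg _
  -- inverse power comparisons
  have hinvmono : ∀ a b : ℕ, a ≤ b → (ε ^ a)⁻¹ ≤ (ε ^ b)⁻¹ := fun a b hab => by
    apply inv_anti₀ (pow_pos hεpos b)
    exact pow_le_pow_of_le_one hεpos.le hε1 hab
  have hinvpos : ∀ a : ℕ, 0 < (ε ^ a)⁻¹ := fun a => inv_pos.2 (pow_pos hεpos a)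
  have hinv1 : ∀ a : ℕ, (1:ℝ) ≤ (ε ^ a)⁻¹ := fun a => by
    rw [le_inv_comm₀ one_pos (pow_pos hεpos a)]
    simpa using pow_le_one₀ hεpos.le hε1
  -- uniform bound on the derivatives of g
  have hgx : ∀ i ∈ Finset.range (k+1),
      ‖iteratedFDerivWithin ℝ i (g ε) U x‖ ≤ Cm * (ε ^ Nm)⁻¹ := by
    intro i hi
    refine (hevε i hi x hx).trans (mul_le_mul ?_ ?_ (hinvpos _).le hCm0)
    · exact (le_abs_self _).trans (Finset.single_le_sum (fun j _ => abs_nonneg (C j)) hi)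
    · exact hinvmono _ _ (Finset.le_sup hi)
  set y := g ε x with hydef
  have hy0 : 0 < y := hg_pos ε hεIoc x (hKU hx)
  have hyl : ε ^ q ≤ y := hq ε hεpos hεI.2 x hx
  have hyu : y ≤ Cm * (ε ^ Nm)⁻¹ := by
    have h0 := hgx 0 (Finset.mem_range.2 (Nat.succ_pos k))
    rwa [norm_iteratedFDerivWithin_zero, Real.norm_eq_abs, abs_of_pos hy0] at h0
  -- bound on the derivatives of sqrt at y
  have hCt : ∀ i, i ≤ k →
      ‖iteratedFDerivWithin ℝ i Real.sqrt (Set.Ioi 0) y‖ ≤ A * (ε ^ (q*k + Nm))⁻¹ := by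
    intro i hik
    have hmem : y ∈ Set.Ioi (0:ℝ) := Set.mem_Ioi.2 hy0
    rw [show iteratedFDerivWithin ℝ i Real.sqrt (Set.Ioi 0) y
          = iteratedFDeriv ℝ i Real.sqrt y from
        iteratedFDerivWithin_of_isOpen i isOpen_Ioi hmem,
      norm_iteratedFDeriv_eq_norm_iteratedDeriv, iteratedDeriv_sqrt i y hy0,
      Real.norm_eq_abs, abs_mul, abs_of_pos (Real.rpow_pos_of_pos hy0 _)]
    rcases Nat.eq_zero_or_pos i with hi0 | hi1
    · subst hi0
      have h1 : |sqrtDC 0| = 1 := by simp [sqrtDC]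
      have h2 : y ^ ((1:ℝ)/2 - (0:ℕ)) = Real.sqrt y := by
        rw [Real.sqrt_eq_rpow]; norm_num
      rw [h1, one_mul, h2]
      have h3 : Real.sqrt y ≤ 1 + y := by
        nlinarith [Real.sq_sqrt hy0.le, Real.sqrt_nonneg y]
      have h4 : (1:ℝ) + y ≤ (1 + Cm) * (ε ^ Nm)⁻¹ := by
        nlinarith [hinv1 Nm, hCm0, hyu]
      refine h3.trans (h4.trans ?_)
      have h5 : (ε ^ Nm)⁻¹ ≤ (ε ^ (q*k + Nm))⁻¹ := hinvmono _ _ (Nat.le_add_left _ _)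
      have h6 : (1 + Cm) ≤ A := by rw [hAdef]; linarith
      exact mul_le_mul h6 h5 (hinvpos _).le (by linarith)
    · have hii : (1:ℝ) ≤ (i:ℝ) := by exact_mod_cast hi1
      have hb0 : (0:ℝ) < ε ^ q := pow_pos hεpos q
      have hb1 : ε ^ q ≤ 1 := pow_le_one₀ hεpos.le hε1
      have s1 : y ^ ((1:ℝ)/2 - i) ≤ (ε ^ q) ^ ((1:ℝ)/2 - i) :=
        Real.rpow_le_rpow_of_nonpos hb0 hyl (by linarith)
      have s2 : (ε ^ q) ^ ((1:ℝ)/2 - i) ≤ (ε ^ q) ^ (-(i:ℝ)) :=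
        Real.rpow_le_rpow_of_exponent_ge hb0 hb1 (by linarith)
      have s3 : (ε ^ q) ^ (-(i:ℝ)) = ((ε ^ (q*i) : ℝ))⁻¹ := by
        rw [Real.rpow_neg hb0.le, Real.rpow_natCast, ← pow_mul]
      have s4 : ((ε ^ (q*i) : ℝ))⁻¹ ≤ (ε ^ (q*k + Nm))⁻¹ :=
        hinvmono _ _ (le_trans (Nat.mul_le_mul_left q hik) (Nat.le_add_right _ _))
      have s5 : y ^ ((1:ℝ)/2 - i) ≤ (ε ^ (q*k + Nm))⁻¹ := by
        calc y ^ ((1:ℝ)/2 - i) ≤ (ε ^ q) ^ ((1:ℝ)/2 - i) := s1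
          _ ≤ (ε ^ q) ^ (-(i:ℝ)) := s2
          _ = ((ε ^ (q*i) : ℝ))⁻¹ := s3
          _ ≤ (ε ^ (q*k + Nm))⁻¹ := s4
      have s6 : |sqrtDC i| ≤ A := by
        rw [hAdef]
        have := Finset.single_le_sum (fun j _ => abs_nonneg (sqrtDC j))
          (Finset.mem_range.2 (Nat.lt_succ_of_le hik))
        linarith
      exact mul_le_mul s6 s5 (Real.rpow_pos_of_pos hy0 _).le (by positivity)
  -- bound D^i on derivatives of g
  set D := (1 + Cm) * (ε ^ Nm)⁻¹ with hDdef
  have hD1 : (1:ℝ) ≤ D := by nlinarith [hinv1 Nm, hCm0]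
  have hD : ∀ i, 1 ≤ i → i ≤ k → ‖iteratedFDerivWithin ℝ i (g ε) U x‖ ≤ D ^ i := by
    intro i h1i hik
    refine ((hgx i (Finset.mem_range.2 (Nat.lt_succ_of_le hik))).trans ?_)
    have : Cm * (ε ^ Nm)⁻¹ ≤ D := by
      rw [hDdef]; nlinarith [hinvpos Nm, hCm0]
    exact this.trans (le_self_pow₀ hD1 (Nat.one_le_iff_ne_zero.1 h1i))
  -- smoothness
  have hsq : ContDiffOn ℝ (k : WithTop ℕ∞) Real.sqrt (Set.Ioi 0) := fun z hz =>
    (Real.contDiffAt_sqrt (ne_of_gt (Set.mem_Ioi.1 hz))).contDiffWithinAt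
  have hmaps : Set.MapsTo (g ε) U (Set.Ioi 0) := fun z hz =>
    Set.mem_Ioi.2 (hg_pos ε hεIoc z hz)
  have hcomp := norm_iteratedFDerivWithin_comp_le (𝕜 := ℝ) (n := k)
    hsq ((hg_smooth ε hεIoc).of_le (by exact_mod_cast le_top)) le_rfl
    isOpen_Ioi.uniqueDiffOn hU.uniqueDiffOn hmaps (hKU hx) hCt hD
  have hfun : Real.sqrt ∘ g ε = fun y => Real.sqrt (g ε y) := rfl
  rw [hfun] at hcomp
  rw [hDdef, mul_pow, inv_pow, ← pow_mul] at hcomp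
  refine hcomp.trans (le_of_eq ?_)
  rw [pow_add ε (q*k + Nm) (Nm*k), mul_inv]
  ring
end
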